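/- arXiv:2204.00554 — 8 statements merged into one kernel-verified Lean document; each statement's English description precedes it below -/
import Mathlib

section
/- Stability of the partially explicit splitting scheme (Theorem 3.1, abstract Hilbert-space form). Let H be a real inner product space, V₁ and V₂ subspaces of H, and R : H → H a continuous linear operator that is symmetric (⟨Rx, y⟩ = ⟨x, Ry⟩ for all x, y) and positive semidefinite (⟨Rx, x⟩ ≥ 0 for all x); write 𝒜(x,y) := ⟨Rx, y⟩ and ‖x‖²_𝒜 := 𝒜(x,x). Assume V₁ and V₂ are 𝒜-orthogonal, i.e. 𝒜(x, y) = 0 for all x ∈ V₁, y ∈ V₂. Let β > 0, Δt > 0 and γ ∈ [0,1) satisfy: (i) |⟨x₁, x₂⟩| ≤ γ‖x₁‖‖x₂‖ for all x₁ ∈ V₁, x₂ ∈ V₂; (ii) Δt · ‖w‖²_𝒜 ≤ β(1−γ)‖w‖² for all w ∈ V₂; (iii) βΔt ≤ 1. Let N be a positive integer and let u₁ⁿ, v₁ⁿ ∈ V₁ and u₂ⁿ, v₂ⁿ ∈ V₂ (n = 0, 1, …, N) satisfy, with uⁿ := u₁ⁿ + u₂ⁿ and vⁿ := v₁ⁿ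 + v₂ⁿ: v₁ⁿ⁺¹ = v₁ⁿ + Δt (u₁ⁿ⁺¹ − β v₁ⁿ); v₂ⁿ⁺¹ = v₂ⁿ + Δt (u₂ⁿ − β v₂ⁿ); and ⟨uⁿ⁺¹ − uⁿ, ψ⟩ + Δt 𝒜(vⁿ⁺¹, ψ) = 0 for every ψ ∈ V₁ and every ψ ∈ V₂, for all n = 0, …, N−1. Then the discrete energy Ẽⁿ := ‖uⁿ‖² + ‖v₁ⁿ‖²_𝒜 + ‖v₂ⁿ‖²_𝒜 satisfies Ẽⁿ⁺¹ ≤ Ẽⁿ for every n = 0, …, N−1; in particular Ẽⁿ ≤ Ẽ⁰ for all n = 1, …, N. -/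
open RealInnerProductSpace

set_option maxHeartbeats 1600000

lemma pes_symm {H : Type*} [NormedAddCommGroup H] [InnerProductSpace ℝ H]
    (R : H →L[ℝ] H) (hsym : ∀ x y : H, ⟪R x, y⟫ = ⟪x, R y⟫) (x y : H) :
    ⟪R x, y⟫ = ⟪R y, x⟫ := by
  rw [hsym, real_inner_comm]

lemma pes_cs {H : Type*} [NormedAddCommGroup H] [InnerProductSpace ℝ H]
    (R : H →L[ℝ] H) (hsym : ∀ x y : H, ⟪R x, y⟫ = ⟪x, R y⟫)
    (hpos : ∀ x : H, 0 ≤ ⟪R x, x⟫) (x y : H) :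
    ⟪R x, y⟫ ^ 2 ≤ ⟪R x, x⟫ * ⟪R y, y⟫ := by
  have h : ∀ t : ℝ, 0 ≤ ⟪R y, y⟫ * (t * t) + (2 * ⟪R x, y⟫) * t + ⟪R x, x⟫ := by
    intro t
    have := hpos (x + t • y)
    have hexp : ⟪R (x + t • y), x + t • y⟫
        = ⟪R y, y⟫ * (t * t) + (2 * ⟪R x, y⟫) * t + ⟪R x, x⟫ := by
      simp only [map_add, map_smul, inner_add_left, inner_add_right,
        real_inner_smul_left, real_inner_smul_right]
      linear_combination t * pes_symm R hsym y x
    linarith [hexp ▸ this]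
  have := discrim_le_zero h
  rw [discrim] at this
  nlinarith

lemma pes_key (a b s K γ : ℝ) (ha : 0 ≤ a) (hb : 0 ≤ b) (hs : 0 ≤ s) (hK : 0 ≤ K)
    (hγ0 : 0 ≤ γ) (hγ1 : γ < 1) (h1 : b ^ 2 ≤ γ * a * b + s)
    (h2 : s ^ 2 ≤ (1 - γ) * K * b ^ 2) :
    b ^ 2 ≤ a ^ 2 + K := by
  have hγ' : (0:ℝ) < 1 - γ := by linarith
  rcases le_or_gt b (γ * a) with h | h
  · have h3 : b * b ≤ (γ * a) * (γ * a) := mul_self_le_mul_self hb h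
    nlinarith [mul_nonneg (mul_nonneg hγ'.le (by linarith : (0:ℝ) ≤ 1 + γ)) (sq_nonneg a)]
  · have hb' : 0 < b := lt_of_le_of_lt (mul_nonneg hγ0 ha) h
    have ht0 : 0 < b - γ * a := by linarith
    have hbt : b * (b - γ * a) ≤ s := by nlinarith
    have hbt2 : (b * (b - γ * a)) ^ 2 ≤ s ^ 2 := by
      have := mul_self_le_mul_self (by positivity) hbt
      nlinarith [this]
    have ht2 : (b - γ * a) ^ 2 ≤ (1 - γ) * K := by
      nlinarith [mul_pos hb' hb', sq_nonneg b]
    have hX0 : (0:ℝ) ≤ (1 - γ) * a ^ 2 + (b - γ * a) ^ 2 := by positivity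
    have c1 : (1 - γ) * b ^ 2
        ≤ (γ ^ 2 + (1 - γ)) * ((1 - γ) * a ^ 2 + (b - γ * a) ^ 2) := by
      nlinarith [sq_nonneg ((1 - γ) * a - γ * (b - γ * a))]
    have c2 : (γ ^ 2 + (1 - γ)) * ((1 - γ) * a ^ 2 + (b - γ * a) ^ 2)
        ≤ (1 - γ) * a ^ 2 + (b - γ * a) ^ 2 := by
      nlinarith [mul_nonneg (mul_nonneg hγ0 hγ'.le) hX0]
    have c4 : (1 - γ) * b ^ 2 ≤ (1 - γ) * (a ^ 2 + K) := by nlinarith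
    exact le_of_mul_le_mul_left (by linarith) hγ'

/-- Stability of the partially explicit splitting scheme (pure reaction case),
abstract Hilbert-space form. -/
theorem partially_explicit_scheme_stability
    {H : Type*} [NormedAddCommGroup H] [InnerProductSpace ℝ H]
    (V₁ V₂ : Submodule ℝ H) (R : H →L[ℝ] H)
    (hsym : ∀ x y : H, ⟪R x, y⟫ = ⟪x, R y⟫)
    (hpos : ∀ x : H, 0 ≤ ⟪R x, x⟫)
    (horth : ∀ x ∈ V₁, ∀ y ∈ V₂, ⟪R x, y⟫ = 0)
    (β Δt γ : ℝ) (hβ : 0 < β) (hΔt : 0 < Δt) (hγ0 : 0 ≤ γ) (hγ1 : γ < 1)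
    (hangle : ∀ x₁ ∈ V₁, ∀ x₂ ∈ V₂, |⟪x₁, x₂⟫| ≤ γ * ‖x₁‖ * ‖x₂‖)
    (hstep : ∀ w ∈ V₂, Δt * ⟪R w, w⟫ ≤ β * (1 - γ) * ‖w‖ ^ 2)
    (hβΔt : β * Δt ≤ 1)
    (N : ℕ) (hN : 0 < N)
    (u₁ v₁ u₂ v₂ : ℕ → H)
    (hmem₁ : ∀ n ≤ N, u₁ n ∈ V₁ ∧ v₁ n ∈ V₁)
    (hmem₂ : ∀ n ≤ N, u₂ n ∈ V₂ ∧ v₂ n ∈ V₂)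
    (hv₁ : ∀ n < N, v₁ (n + 1) = v₁ n + Δt • (u₁ (n + 1) - β • v₁ n))
    (hv₂ : ∀ n < N, v₂ (n + 1) = v₂ n + Δt • (u₂ n - β • v₂ n))
    (hu : ∀ n < N, ∀ ψ : H, (ψ ∈ V₁ ∨ ψ ∈ V₂) →
      ⟪(u₁ (n + 1) + u₂ (n + 1)) - (u₁ n + u₂ n), ψ⟫
        + Δt * ⟪R (v₁ (n + 1) + v₂ (n + 1)), ψ⟫ = 0) :
    (∀ n < N,
      ‖u₁ (n + 1) + u₂ (n + 1)‖ ^ 2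
          + ⟪R (v₁ (n + 1)), v₁ (n + 1)⟫ + ⟪R (v₂ (n + 1)), v₂ (n + 1)⟫
        ≤ ‖u₁ n + u₂ n‖ ^ 2 + ⟪R (v₁ n), v₁ n⟫ + ⟪R (v₂ n), v₂ n⟫) ∧
    (∀ n, 1 ≤ n → n ≤ N →
      ‖u₁ n + u₂ n‖ ^ 2 + ⟪R (v₁ n), v₁ n⟫ + ⟪R (v₂ n), v₂ n⟫
        ≤ ‖u₁ 0 + u₂ 0‖ ^ 2 + ⟪R (v₁ 0), v₁ 0⟫ + ⟪R (v₂ 0), v₂ 0⟫) := by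
  have step : ∀ n < N,
      ‖u₁ (n + 1) + u₂ (n + 1)‖ ^ 2
          + ⟪R (v₁ (n + 1)), v₁ (n + 1)⟫ + ⟪R (v₂ (n + 1)), v₂ (n + 1)⟫
        ≤ ‖u₁ n + u₂ n‖ ^ 2 + ⟪R (v₁ n), v₁ n⟫ + ⟪R (v₂ n), v₂ n⟫ := by
    intro n hn
    have hn1 : n + 1 ≤ N := Nat.succ_le_of_lt hn
    obtain ⟨mu1, mv1⟩ := hmem₁ n hn.le
    obtain ⟨mu1', mv1'⟩ := hmem₁ (n + 1) hn1
    obtain ⟨mu2, mv2⟩ := hmem₂ n hn.le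
    obtain ⟨mu2', mv2'⟩ := hmem₂ (n + 1) hn1
    -- the three tested equations
    have hI : ⟪(u₁ (n + 1) + u₂ (n + 1)) - (u₁ n + u₂ n), u₁ (n + 1)⟫
        + Δt * ⟪R (v₁ (n + 1)), u₁ (n + 1)⟫ = 0 := by
      have h := hu n hn (u₁ (n + 1)) (Or.inl mu1')
      rw [map_add, inner_add_left, pes_symm R hsym (v₂ (n + 1)) (u₁ (n + 1)),
        horth _ mu1' _ mv2'] at h
      linarith
    have hII : ⟪(u₁ (n + 1) + u₂ (n + 1)) - (u₁ n + u₂ n), u₂ n⟫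
        + Δt * ⟪R (v₂ (n + 1)), u₂ n⟫ = 0 := by
      have h := hu n hn (u₂ n) (Or.inr mu2)
      rw [map_add, inner_add_left, horth _ mv1' _ mu2] at h
      linarith
    have hIII : ⟪(u₁ (n + 1) + u₂ (n + 1)) - (u₁ n + u₂ n), u₂ (n + 1) - u₂ n⟫
        + Δt * ⟪R (v₂ (n + 1)), u₂ (n + 1) - u₂ n⟫ = 0 := by
      have h := hu n hn (u₂ (n + 1) - u₂ n) (Or.inr (sub_mem mu2' mu2))
      rw [map_add, inner_add_left, horth _ mv1' _ (sub_mem mu2' mu2)] at h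
      linarith
    -- using the update equations for v₁, v₂
    have hE1 : Δt * ⟪R (v₁ (n + 1)), u₁ (n + 1)⟫
        = ⟪R (v₁ (n + 1)), v₁ (n + 1)⟫ - ⟪R (v₁ (n + 1)), v₁ n⟫
          + Δt * β * ⟪R (v₁ (n + 1)), v₁ n⟫ := by
      have h := congrArg (fun z => ⟪R (v₁ (n + 1)), z⟫) (hv₁ n hn)
      simp only [inner_add_right, inner_sub_right, real_inner_smul_right] at h
      linear_combination -h
    have hE2 : Δt * ⟪R (v₂ (n + 1)), u₂ n⟫
        = ⟪R (v₂ (n + 1)), v₂ (n + 1)⟫ - ⟪R (v₂ (n + 1)), v₂ n⟫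
          + Δt * β * ⟪R (v₂ (n + 1)), v₂ n⟫ := by
      have h := congrArg (fun z => ⟪R (v₂ (n + 1)), z⟫) (hv₂ n hn)
      simp only [inner_add_right, inner_sub_right, real_inner_smul_right] at h
      linear_combination -h
    -- expansion of the A-norm of increments
    have hX1 : ⟪R (v₁ (n + 1) - v₁ n), v₁ (n + 1) - v₁ n⟫
        = ⟪R (v₁ (n + 1)), v₁ (n + 1)⟫ - 2 * ⟪R (v₁ (n + 1)), v₁ n⟫
          + ⟪R (v₁ n), v₁ n⟫ := by
      simp only [map_sub, inner_sub_left, inner_sub_right]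
      linear_combination pes_symm R hsym (v₁ (n + 1)) (v₁ n)
    have hX2 : ⟪R (v₂ (n + 1) - v₂ n), v₂ (n + 1) - v₂ n⟫
        = ⟪R (v₂ (n + 1)), v₂ (n + 1)⟫ - 2 * ⟪R (v₂ (n + 1)), v₂ n⟫
          + ⟪R (v₂ n), v₂ n⟫ := by
      simp only [map_sub, inner_sub_left, inner_sub_right]
      linear_combination pes_symm R hsym (v₂ (n + 1)) (v₂ n)
    have hX1' : Δt * β * ⟪R (v₁ (n + 1) - v₁ n), v₁ (n + 1) - v₁ n⟫
        = Δt * β * ⟪R (v₁ (n + 1)), v₁ (n + 1)⟫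
          - 2 * (Δt * β * ⟪R (v₁ (n + 1)), v₁ n⟫)
          + Δt * β * ⟪R (v₁ n), v₁ n⟫ := by linear_combination (Δt * β) * hX1
    have hX2' : Δt * β * ⟪R (v₂ (n + 1) - v₂ n), v₂ (n + 1) - v₂ n⟫
        = Δt * β * ⟪R (v₂ (n + 1)), v₂ (n + 1)⟫
          - 2 * (Δt * β * ⟪R (v₂ (n + 1)), v₂ n⟫)
          + Δt * β * ⟪R (v₂ n), v₂ n⟫ := by linear_combination (Δt * β) * hX2
    -- inner product expansions for the u-part
    have hdu : (u₁ (n + 1) + u₂ (n + 1)) - (u₁ n + u₂ n)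
        = (u₁ (n + 1) - u₁ n) + (u₂ (n + 1) - u₂ n) := by abel
    have hU : ⟪u₁ n + u₂ n, u₁ n + u₂ n⟫
        = ⟪u₁ (n + 1) + u₂ (n + 1), u₁ (n + 1) + u₂ (n + 1)⟫
          - 2 * ⟪u₁ (n + 1) + u₂ (n + 1), (u₁ (n + 1) + u₂ (n + 1)) - (u₁ n + u₂ n)⟫
          + ⟪(u₁ (n + 1) + u₂ (n + 1)) - (u₁ n + u₂ n),
              (u₁ (n + 1) + u₂ (n + 1)) - (u₁ n + u₂ n)⟫ := by
      have h := real_inner_sub_sub_self (u₁ (n + 1) + u₂ (n + 1))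
        ((u₁ (n + 1) + u₂ (n + 1)) - (u₁ n + u₂ n))
      rw [show (u₁ (n + 1) + u₂ (n + 1)) - ((u₁ (n + 1) + u₂ (n + 1)) - (u₁ n + u₂ n))
          = u₁ n + u₂ n from by abel] at h
      linarith
    have hcomm : ⟪u₁ (n + 1) + u₂ (n + 1), (u₁ (n + 1) + u₂ (n + 1)) - (u₁ n + u₂ n)⟫
        = ⟪(u₁ (n + 1) + u₂ (n + 1)) - (u₁ n + u₂ n), u₁ (n + 1) + u₂ (n + 1)⟫ :=
      real_inner_comm _ _
    have hDD : ⟪(u₁ (n + 1) + u₂ (n + 1)) - (u₁ n + u₂ n),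
          (u₁ (n + 1) + u₂ (n + 1)) - (u₁ n + u₂ n)⟫
        = ⟪u₁ (n + 1) - u₁ n, u₁ (n + 1) - u₁ n⟫
          + 2 * ⟪u₁ (n + 1) - u₁ n, u₂ (n + 1) - u₂ n⟫
          + ⟪u₂ (n + 1) - u₂ n, u₂ (n + 1) - u₂ n⟫ := by
      rw [hdu]; exact real_inner_add_add_self _ _
    have hdd2 : ⟪(u₁ (n + 1) + u₂ (n + 1)) - (u₁ n + u₂ n), u₂ (n + 1) - u₂ n⟫
        = ⟪u₁ (n + 1) - u₁ n, u₂ (n + 1) - u₂ n⟫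
          + ⟪u₂ (n + 1) - u₂ n, u₂ (n + 1) - u₂ n⟫ := by
      rw [hdu, inner_add_left]
    have hL : ⟪(u₁ (n + 1) + u₂ (n + 1)) - (u₁ n + u₂ n), u₁ (n + 1)⟫
        + ⟪(u₁ (n + 1) + u₂ (n + 1)) - (u₁ n + u₂ n), u₂ n⟫
        = ⟪(u₁ (n + 1) + u₂ (n + 1)) - (u₁ n + u₂ n), u₁ (n + 1) + u₂ (n + 1)⟫
          - ⟪(u₁ (n + 1) + u₂ (n + 1)) - (u₁ n + u₂ n), u₂ (n + 1) - u₂ n⟫ := by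
      rw [← inner_add_right, ← inner_sub_right]
      congr 1
      abel
    -- the key inequality b² ≤ a² + Δtβ‖v₂ⁿ⁺¹‖²_A
    have hkey : ⟪u₂ (n + 1) - u₂ n, u₂ (n + 1) - u₂ n⟫
        ≤ ⟪u₁ (n + 1) - u₁ n, u₁ (n + 1) - u₁ n⟫
          + Δt * β * ⟪R (v₂ (n + 1)), v₂ (n + 1)⟫ := by
      rw [real_inner_self_eq_norm_sq, real_inner_self_eq_norm_sq]
      refine pes_key ‖u₁ (n + 1) - u₁ n‖ ‖u₂ (n + 1) - u₂ n‖
        (Δt * |⟪R (v₂ (n + 1)), u₂ (n + 1) - u₂ n⟫|)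
        (Δt * β * ⟪R (v₂ (n + 1)), v₂ (n + 1)⟫) γ (norm_nonneg _) (norm_nonneg _)
        (mul_nonneg hΔt.le (abs_nonneg _))
        (mul_nonneg (mul_nonneg hΔt.le hβ.le) (hpos _)) hγ0 hγ1 ?_ ?_
      · have e1 : ⟪u₂ (n + 1) - u₂ n, u₂ (n + 1) - u₂ n⟫ = ‖u₂ (n + 1) - u₂ n‖ ^ 2 :=
          real_inner_self_eq_norm_sq _
        have e2 := hangle _ (sub_mem mu1' mu1) _ (sub_mem mu2' mu2)
        have e3 : Δt * (-⟪R (v₂ (n + 1)), u₂ (n + 1) - u₂ n⟫)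
            ≤ Δt * |⟪R (v₂ (n + 1)), u₂ (n + 1) - u₂ n⟫| :=
          mul_le_mul_of_nonneg_left (neg_le_abs _) hΔt.le
        have e4 := neg_abs_le ⟪u₁ (n + 1) - u₁ n, u₂ (n + 1) - u₂ n⟫
        linarith [hdd2 ▸ hIII]
      · have hCS := pes_cs R hsym hpos (v₂ (n + 1)) (u₂ (n + 1) - u₂ n)
        have hst := hstep _ (sub_mem mu2' mu2)
        have hQ0 : 0 ≤ ⟪R (v₂ (n + 1)), v₂ (n + 1)⟫ := hpos _
        have f1 : Δt ^ 2 * ⟪R (v₂ (n + 1)), u₂ (n + 1) - u₂ n⟫ ^ 2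
            ≤ Δt ^ 2 * (⟪R (v₂ (n + 1)), v₂ (n + 1)⟫
              * ⟪R (u₂ (n + 1) - u₂ n), u₂ (n + 1) - u₂ n⟫) :=
          mul_le_mul_of_nonneg_left hCS (sq_nonneg Δt)
        have f2 : (Δt * ⟪R (v₂ (n + 1)), v₂ (n + 1)⟫)
              * (Δt * ⟪R (u₂ (n + 1) - u₂ n), u₂ (n + 1) - u₂ n⟫)
            ≤ (Δt * ⟪R (v₂ (n + 1)), v₂ (n + 1)⟫)
              * (β * (1 - γ) * ‖u₂ (n + 1) - u₂ n‖ ^ 2) :=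
          mul_le_mul_of_nonneg_left hst (mul_nonneg hΔt.le hQ0)
        have e4 : (Δt * |⟪R (v₂ (n + 1)), u₂ (n + 1) - u₂ n⟫|) ^ 2
            = Δt ^ 2 * ⟪R (v₂ (n + 1)), u₂ (n + 1) - u₂ n⟫ ^ 2 := by
          rw [mul_pow, sq_abs]
        rw [e4]
        nlinarith [f1, f2]
    -- nonnegativity facts
    have h_pq : 0 ≤ (1 - β * Δt) * (⟪R (v₁ (n + 1) - v₁ n), v₁ (n + 1) - v₁ n⟫
        + ⟪R (v₂ (n + 1) - v₂ n), v₂ (n + 1) - v₂ n⟫) :=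
      mul_nonneg (by linarith) (add_nonneg (hpos _) (hpos _))
    have h_P : 0 ≤ Δt * β * (⟪R (v₁ (n + 1)), v₁ (n + 1)⟫ + ⟪R (v₁ n), v₁ n⟫
        + ⟪R (v₂ n), v₂ n⟫) :=
      mul_nonneg (mul_nonneg hΔt.le hβ.le)
        (add_nonneg (add_nonneg (hpos _) (hpos _)) (hpos _))
    rw [← real_inner_self_eq_norm_sq, ← real_inner_self_eq_norm_sq]
    linarith only [hI, hII, hE1, hE2, hX1, hX2, hX1', hX2', hU, hcomm, hDD, hdd2,
      hL, hkey, h_pq, h_P, hβΔt]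
  refine ⟨step, ?_⟩
  intro n hn1 hnN
  have : ∀ m ≤ N, ‖u₁ m + u₂ m‖ ^ 2 + ⟪R (v₁ m), v₁ m⟫ + ⟪R (v₂ m), v₂ m⟫
      ≤ ‖u₁ 0 + u₂ 0‖ ^ 2 + ⟪R (v₁ 0), v₁ 0⟫ + ⟪R (v₂ 0), v₂ 0⟫ := by
    intro m
    induction m with
    | zero => exact fun _ => le_rfl
    | succ k ih =>
      intro hk
      have hkN : k < N := Nat.lt_of_succ_le hk
      exact (step k hkN).trans (ih hkN.le)
  exact this n hnN
end

section
/- Unconditional stability of the semi-implicit scheme (pure reaction case). Let H be a real inner product space, V a subspace of H, and R : H → H a continuous linear operator that is symmetric (⟨Rx, y⟩ = ⟨x, Ry⟩) and positive semidefinite (⟨Rx, x⟩ ≥ 0). Let β > 0 and Δt > 0. Let N be a positive integer and let uⁿ ∈ V and vⁿ ∈ H (n = 0, 1, …, N) satisfy, for all n = 0, …, N−1: vⁿ⁺¹ = vⁿ + Δt (uⁿ⁺¹ − β vⁿ⁺¹), and ⟨uⁿ⁺¹ − uⁿ, ψ⟩ + Δt ⟨R vⁿ⁺¹, ψ⟩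 = 0 for every ψ ∈ V. Then the discrete energy Eⁿ := ‖uⁿ‖² + ⟨R vⁿ, vⁿ⟩ satisfies Eⁿ⁺¹ ≤ Eⁿ for every n = 0, …, N−1, and hence Eⁿ ≤ E⁰ for all n = 1, …, N, with no restriction on the size of Δt. -/
open RealInnerProductSpace

/-- Unconditional stability of the semi-implicit scheme (pure reaction case),
abstract Hilbert-space form. -/
theorem semi_implicit_scheme_stability
    {H : Type*} [NormedAddCommGroup H] [InnerProductSpace ℝ H]
    (V : Submodule ℝ H) (R : H →L[ℝ] H)
    (hsym : ∀ x y : H, ⟪R x, y⟫ = ⟪x, R y⟫)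
    (hpos : ∀ x : H, 0 ≤ ⟪R x, x⟫)
    (β Δt : ℝ) (hβ : 0 < β) (hΔt : 0 < Δt)
    (N : ℕ) (hN : 0 < N)
    (u : ℕ → H) (v : ℕ → H)
    (humem : ∀ n ≤ N, u n ∈ V)
    (hv : ∀ n < N, v (n + 1) = v n + Δt • (u (n + 1) - β • v (n + 1)))
    (hu : ∀ n < N, ∀ ψ ∈ V, ⟪u (n + 1) - u n, ψ⟫ + Δt * ⟪R (v (n + 1)), ψ⟫ = 0) :
    (∀ n < N,
      ‖u (n + 1)‖ ^ 2 + ⟪R (v (n + 1)), v (n + 1)⟫ ≤ ‖u n‖ ^ 2 + ⟪R (v n), v n⟫) ∧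
    (∀ n, 1 ≤ n → n ≤ N →
      ‖u n‖ ^ 2 + ⟪R (v n), v n⟫ ≤ ‖u 0‖ ^ 2 + ⟪R (v 0), v 0⟫) := by
  have step : ∀ n < N,
      ‖u (n + 1)‖ ^ 2 + ⟪R (v (n + 1)), v (n + 1)⟫ ≤ ‖u n‖ ^ 2 + ⟪R (v n), v n⟫ := by
    intro n hn
    have key := hu n hn (u (n + 1)) (humem (n + 1) hn)
    -- rewrite the time-stepping relation
    have hsmul : Δt • u (n + 1) = (v (n + 1) - v n) + (Δt * β) • v (n + 1) := by
      have h0 : v (n + 1) - (v n + Δt • (u (n + 1) - β • v (n + 1))) = 0 :=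
        sub_eq_zero.mpr (hv n hn)
      rw [show (v (n + 1) - v n) + (Δt * β) • v (n + 1)
          = Δt • u (n + 1) + (v (n + 1) - (v n + Δt • (u (n + 1) - β • v (n + 1)))) from by
        rw [smul_sub, smul_smul]; abel, h0, add_zero]
    have hRu : Δt * ⟪R (v (n + 1)), u (n + 1)⟫
        = ⟪R (v (n + 1)), v (n + 1) - v n⟫ + Δt * β * ⟪R (v (n + 1)), v (n + 1)⟫ := by
      rw [← real_inner_smul_right, hsmul, inner_add_right, real_inner_smul_right]
    -- expand key
    rw [inner_sub_left, hRu] at key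
    have e1 : ⟪u (n + 1), u (n + 1)⟫ = ‖u (n + 1)‖ ^ 2 := real_inner_self_eq_norm_sq _
    -- Cauchy-Schwarz-ish: 2⟪u n, u (n+1)⟫ ≤ ‖u n‖² + ‖u (n+1)‖²
    have hcs : 2 * ⟪u n, u (n + 1)⟫ ≤ ‖u n‖ ^ 2 + ‖u (n + 1)‖ ^ 2 := by
      have h0 : (0:ℝ) ≤ ‖u n - u (n + 1)‖ ^ 2 := sq_nonneg _
      rw [norm_sub_sq_real] at h0
      linarith
    -- positivity: 2⟪R v', v⟫ ≤ ⟪R v', v'⟫ + ⟪R v, v⟫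
    have hR : 2 * ⟪R (v (n + 1)), v n⟫
        ≤ ⟪R (v (n + 1)), v (n + 1)⟫ + ⟪R (v n), v n⟫ := by
      have h0 := hpos (v (n + 1) - v n)
      rw [map_sub, inner_sub_left, inner_sub_right, inner_sub_right] at h0
      have hcomm : ⟪R (v n), v (n + 1)⟫ = ⟪R (v (n + 1)), v n⟫ := by
        rw [hsym, real_inner_comm]
      linarith
    have hRR := hpos (v (n + 1))
    rw [inner_sub_right] at key
    nlinarith [mul_nonneg (mul_nonneg hΔt.le hβ.le) hRR]
  refine ⟨step, ?_⟩
  intro n hn1 hnN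
  clear hv hu
  induction n with
  | zero => omega
  | succ k ih =>
    rcases Nat.eq_zero_or_pos k with rfl | hk
    · exact step 0 (by omega)
    · exact le_trans (step k (by omega)) (ih (by omega) (by omega))
end

section
/- Stability of the continuous dememorized system. Let H be a real Hilbert space, M a positive integer, and for each i = 1, …, M let Rᵢ : H → H be a continuous linear operator that is symmetric (⟨Rᵢx, y⟩ = ⟨x, Rᵢy⟩) and positive semidefinite (⟨Rᵢx, x⟩ ≥ 0), and let βᵢ ≥ 0. Let T > 0 and let u : [0,T] → H and vᵢ : [0,T] → H (i = 1, …, M) be differentiable functions satisfying u′(t) = −Σᵢ₌₁ᴹ Rᵢ(vᵢ(t)) and vᵢ′(t) = u(t) − βᵢ vᵢ(t) for all t ∈ [0,T]. Then the energy E(t) := ‖u(t)‖² + Σᵢ₌₁ᴹ ⟨Rᵢ vᵢ(t), vᵢ(t)⟩ is nonincreasing on [0,T]; in particular E(T) ≤ E(0). -/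
/-!
The energy is the sum of `‖u‖²` and the quadratic forms `⟪Rᵢ vᵢ, vᵢ⟫`. Differentiating along the
flow, the coupling terms `-2 ⟪u, Rᵢ vᵢ⟫` from `u' = -∑ Rᵢ vᵢ` and `2 ⟪Rᵢ vᵢ, u⟫` from
`vᵢ' = u - βᵢ vᵢ` cancel by the symmetry of `Rᵢ`, leaving `E' = -2 ∑ βᵢ ⟪Rᵢ vᵢ, vᵢ⟫ ≤ 0`.
-/

open RealInnerProductSpace

theorem antitoneOn_of_hasDerivAt_nonpos {D : Set ℝ} (hD : Convex ℝ D) {f f' : ℝ → ℝ}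
    (hf : ∀ x ∈ D, HasDerivAt f (f' x) x) (hf' : ∀ x ∈ D, f' x ≤ 0) : AntitoneOn f D :=
  antitoneOn_of_hasDerivWithinAt_nonpos hD
    (fun x hx => (hf x hx).continuousAt.continuousWithinAt)
    (fun x hx => (hf x (interior_subset hx)).hasDerivWithinAt)
    (fun x hx => hf' x (interior_subset hx))

section Energy

variable {H : Type*} [NormedAddCommGroup H] [InnerProductSpace ℝ H]

theorem HasDerivAt.inner_map_self {A : H →L[ℝ] H} (hA : (A : H →ₗ[ℝ] H).IsSymmetric)
    {x : ℝ → H} {x' : H} {t : ℝ} (hx : HasDerivAt x x' t) :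
    HasDerivAt (fun s => ⟪A (x s), x s⟫) (2 * ⟪A (x t), x'⟫) t := by
  refine ((A.hasFDerivAt.comp_hasDerivAt t hx).inner ℝ hx).congr_deriv ?_
  change ⟪A (x t), x'⟫ + ⟪A x', x t⟫ = _
  rw [show ⟪A x', x t⟫ = ⟪x', A (x t)⟫ from hA x' (x t), real_inner_comm x']
  ring

theorem hasDerivAt_dememorized_energy {ι : Type*} [Fintype ι] {R : ι → H →L[ℝ] H}
    (hsym : ∀ i, (R i : H →ₗ[ℝ] H).IsSymmetric) {β : ι → ℝ} {u : ℝ → H} {v : ι → ℝ → H}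
    {t : ℝ} (hu : HasDerivAt u (-(∑ i, R i (v i t))) t)
    (hv : ∀ i, HasDerivAt (v i) (u t - β i • v i t) t) :
    HasDerivAt (fun s => ‖u s‖ ^ 2 + ∑ i, ⟪R i (v i s), v i s⟫)
      (-(2 * ∑ i, β i * ⟪R i (v i t), v i t⟫)) t := by
  have hforms := HasDerivAt.fun_sum fun i (_ : i ∈ Finset.univ) => (hv i).inner_map_self (hsym i)
  refine (hu.norm_sq.add hforms).congr_deriv ?_
  simp only [inner_neg_right, inner_sum, inner_sub_right, inner_smul_right, real_inner_comm (u t),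
    mul_sub, Finset.sum_sub_distrib, ← Finset.mul_sum]
  ring

end Energy

theorem dememorized_continuous_stability_general
    {H : Type*} [NormedAddCommGroup H] [InnerProductSpace ℝ H]
    (M : ℕ)
    (R : Fin M → H →L[ℝ] H)
    (hsym : ∀ i, ∀ x y : H, ⟪R i x, y⟫ = ⟪x, R i y⟫)
    (hpos : ∀ i, ∀ x : H, 0 ≤ ⟪R i x, x⟫)
    (β : Fin M → ℝ) (hβ : ∀ i, 0 ≤ β i)
    (T : ℝ) (hT : 0 < T)
    (u : ℝ → H) (v : Fin M → ℝ → H)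
    (hu : ∀ t ∈ Set.Icc (0 : ℝ) T, HasDerivAt u (-(∑ i, R i (v i t))) t)
    (hv : ∀ i, ∀ t ∈ Set.Icc (0 : ℝ) T, HasDerivAt (v i) (u t - β i • v i t) t) :
    AntitoneOn (fun t => ‖u t‖ ^ 2 + ∑ i, ⟪R i (v i t), v i t⟫) (Set.Icc (0 : ℝ) T) ∧
    ‖u T‖ ^ 2 + ∑ i, ⟪R i (v i T), v i T⟫ ≤ ‖u 0‖ ^ 2 + ∑ i, ⟪R i (v i 0), v i 0⟫ := by
  have hanti := antitoneOn_of_hasDerivAt_nonpos (convex_Icc 0 T)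
    (fun t ht => hasDerivAt_dememorized_energy hsym (hu t ht) fun i => hv i t ht)
    fun t _ => neg_nonpos.2 <| mul_nonneg zero_le_two <|
      Finset.sum_nonneg fun i _ => mul_nonneg (hβ i) (hpos i _)
  exact ⟨hanti, hanti (Set.left_mem_Icc.2 hT.le) (Set.right_mem_Icc.2 hT.le) hT.le⟩

/-- Stability of the continuous dememorized system: the energy is nonincreasing
on `[0, T]`; in particular `E T ≤ E 0`. -/
theorem dememorized_continuous_stability
    {H : Type*} [NormedAddCommGroup H] [InnerProductSpace ℝ H] [CompleteSpace H]
    (M : ℕ) (hM : 0 < M)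
    (R : Fin M → H →L[ℝ] H)
    (hsym : ∀ i, ∀ x y : H, ⟪R i x, y⟫ = ⟪x, R i y⟫)
    (hpos : ∀ i, ∀ x : H, 0 ≤ ⟪R i x, x⟫)
    (β : Fin M → ℝ) (hβ : ∀ i, 0 ≤ β i)
    (T : ℝ) (hT : 0 < T)
    (u : ℝ → H) (v : Fin M → ℝ → H)
    (hu : ∀ t ∈ Set.Icc (0 : ℝ) T, HasDerivAt u (-(∑ i, R i (v i t))) t)
    (hv : ∀ i, ∀ t ∈ Set.Icc (0 : ℝ) T, HasDerivAt (v i) (u t - β i • v i t) t) :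
    AntitoneOn (fun t => ‖u t‖ ^ 2 + ∑ i, ⟪R i (v i t), v i t⟫) (Set.Icc (0 : ℝ) T) ∧
    ‖u T‖ ^ 2 + ∑ i, ⟪R i (v i T), v i T⟫ ≤ ‖u 0‖ ^ 2 + ∑ i, ⟪R i (v i 0), v i 0⟫ :=
  dememorized_continuous_stability_general M R hsym hpos β hβ T hT u v hu hv
end

section
/- Dememorization identity (transport equation for the auxiliary variable). Let d be a positive integer, ã ∈ ℝᵈ a constant vector, β ∈ ℝ, and let u : ℝᵈ × ℝ → ℝ be continuously differentiable. Define v : ℝᵈ × ℝ → ℝ by v(x,t) := ∫₀ᵗ e^{−β(t−s)} u(x − (t−s)ã, s) ds. Then v is differentiable in x and t, and for every x ∈ ℝᵈ and t ∈ ℝ it satisfies ∂ₜ v(x,t) + β v(x,t) + ã · ∇ₓ v(x,t) = u(x,t). -/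
/-!
Along the characteristic `r ↦ (x + r a', t + r)` the argument `x - (t - s) a'` of `u` does not
move, so there `v = e^{-βτ} ∫₀^τ e^{βs} u(x - (t - s) a', s) ds` with `τ = t + r`, and the
fundamental theorem of calculus gives the derivative `u(x, t) - β v(x, t)` at `r = 0`.
Differentiating under the integral sign shows that `v` is jointly `C¹`, so this directional
derivative is `∂ₜv + a'·∇ₓv`.
-/

open MeasureTheory RealInnerProductSpace

section ParametricPrimitive

variable {E F : Type*} [NormedAddCommGroup E] [NormedSpace ℝ E] [ProperSpace E]
  [NormedAddCommGroup F] [NormedSpace ℝ F] {h : E × ℝ → F}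

theorem hasFDerivAt_parametric_intervalIntegral_of_contDiff (hh : ContDiff ℝ 1 h) (a b : ℝ)
    (x₀ : E) :
    HasFDerivAt (fun x => ∫ s in a..b, h (x, s))
      (∫ s in a..b, fderiv ℝ h (x₀, s) ∘L .inl ℝ E ℝ) x₀ := by
  have hD : Continuous fun p : E × ℝ => fderiv ℝ h p ∘L .inl ℝ E ℝ :=
    (hh.continuous_fderiv one_ne_zero).clm_comp continuous_const
  obtain ⟨C, hC⟩ :=
    ((isCompact_closedBall x₀ 1).prod isCompact_uIcc).exists_bound_of_continuousOn
      (hD.continuousOn (s := Metric.closedBall x₀ 1 ×ˢ Set.uIcc a b))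
  refine intervalIntegral.hasFDerivAt_integral_of_dominated_of_fderiv_le (bound := fun _ => C)
    (F' := fun x s => fderiv ℝ h (x, s) ∘L .inl ℝ E ℝ)
    (Metric.closedBall_mem_nhds x₀ one_pos) ?_ ?_ ?_ ?_ ?_ ?_
  · exact .of_forall fun x =>
      (hh.continuous.comp (Continuous.prodMk_right x)).aestronglyMeasurable
  · exact (hh.continuous.comp (Continuous.prodMk_right x₀)).intervalIntegrable _ _
  · exact (hD.comp (Continuous.prodMk_right x₀)).aestronglyMeasurable
  · exact .of_forall fun s hs x hx => hC (x, s) ⟨hx, Set.uIoc_subset_uIcc hs⟩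
  · exact intervalIntegrable_const
  · exact .of_forall fun s _ x _ =>
      (hh.differentiable one_ne_zero (x, s)).hasFDerivAt.comp x (hasFDerivAt_prodMk_left x s)

theorem contDiff_one_parametric_primitive_of_contDiff [CompleteSpace F] (hh : ContDiff ℝ 1 h)
    (a : ℝ) : ContDiff ℝ 1 (fun p : E × ℝ => ∫ s in a..p.2, h (p.1, s)) := by
  set D₁ : E × ℝ → E →L[ℝ] F := fun p => ∫ s in a..p.2, fderiv ℝ h (p.1, s) ∘L .inl ℝ E ℝ
  set D₂ : E × ℝ → ℝ →L[ℝ] F := fun p => .toSpanSingleton ℝ (h p)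
  have hD₁ : Continuous D₁ :=
    intervalIntegral.continuous_parametric_primitive_of_continuous
      (f := fun x s => fderiv ℝ h (x, s) ∘L .inl ℝ E ℝ)
      ((hh.continuous_fderiv one_ne_zero).clm_comp continuous_const)
  have hD₂ : Continuous D₂ :=
    (ContinuousLinearMap.toSpanSingletonCLE (𝕜 := ℝ)).continuous.comp hh.continuous
  rw [contDiff_one_iff_hasFDerivAt]
  refine ⟨fun p => (D₁ p).coprod (D₂ p),
    (ContinuousLinearMap.coprodEquivL ℝ).continuous.comp (hD₁.prodMk hD₂), fun p => ?_⟩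
  refine (hasStrictFDerivAt_uncurry_coprod (𝕜 := ℝ) (f := fun x t => ∫ s in a..t, h (x, s))
    (f₁ := fun x t => D₁ (x, t)) (f₂ := fun x t => D₂ (x, t)) (.of_forall fun q => ?_)
    (.of_forall fun q => ?_) hD₁.continuousAt hD₂.continuousAt).hasFDerivAt
  · exact hasFDerivAt_parametric_intervalIntegral_of_contDiff hh a q.2 q.1
  · exact ((hh.continuous.comp (Continuous.prodMk_right q.1)).integral_hasStrictDerivAt
      a q.2).hasDerivAt.hasFDerivAt

end ParametricPrimitive

theorem deriv_add_inner_gradient_eq_of_hasFDerivAt {E : Type*} [NormedAddCommGroup E]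
    [InnerProductSpace ℝ E] [CompleteSpace E] {w : E × ℝ → ℝ} {W : E × ℝ →L[ℝ] ℝ} {x : E}
    {t : ℝ} (hw : HasFDerivAt w W (x, t)) (a : E) :
    deriv (fun τ => w (x, τ)) t + ⟪a, gradient (fun y => w (y, t)) x⟫ = W (a, 1) := by
  have hdt : HasFDerivAt (fun τ => w (x, τ)) (W ∘L .inr ℝ E ℝ) t :=
    hw.comp t (hasFDerivAt_prodMk_right x t)
  have hdx : HasFDerivAt (fun y => w (y, t)) (W ∘L .inl ℝ E ℝ) x :=
    hw.comp x (hasFDerivAt_prodMk_left x t)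
  rw [hdt.hasDerivAt.deriv, gradient, hdx.fderiv, real_inner_comm,
    InnerProductSpace.toDual_symm_apply]
  simp [← map_add]

section Characteristic

variable {E : Type*} [NormedAddCommGroup E] [NormedSpace ℝ E]

noncomputable def characteristicIntegral (a : E) (β : ℝ) (u : E → ℝ → ℝ) (x : E) (t : ℝ) : ℝ :=
  ∫ s in (0 : ℝ)..t, Real.exp (-β * (t - s)) * u (x - (t - s) • a) s

theorem characteristicIntegral_eq_exp_mul (a : E) (β : ℝ) (u : E → ℝ → ℝ) (x : E) (t : ℝ) :
    characteristicIntegral a β u x t =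
      Real.exp (-β * t) * ∫ s in (0 : ℝ)..t, Real.exp (β * s) * u (x - (t - s) • a) s := by
  rw [characteristicIntegral, ← intervalIntegral.integral_const_mul]
  congr 1 with s
  rw [← mul_assoc, ← Real.exp_add]
  ring_nf

theorem contDiff_characteristicIntegral [ProperSpace E] (a : E) (β : ℝ) {u : E → ℝ → ℝ}
    (hu : ContDiff ℝ 1 (fun p : E × ℝ => u p.1 p.2)) :
    ContDiff ℝ 1 (fun p : E × ℝ => characteristicIntegral a β u p.1 p.2) := by
  set h : E × ℝ → ℝ := fun q => Real.exp (β * q.2) * u (q.1 + q.2 • a) q.2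
  have hh : ContDiff ℝ 1 h :=
    (contDiff_const.mul contDiff_snd).exp.mul
      (hu.comp ((contDiff_fst.add (contDiff_snd.smul contDiff_const)).prodMk contDiff_snd))
  have hΦ : ContDiff ℝ 1 fun p : E × ℝ => (p.1 - p.2 • a, p.2) :=
    (contDiff_fst.sub (contDiff_snd.smul contDiff_const)).prodMk contDiff_snd
  have hfactor : (fun p : E × ℝ => characteristicIntegral a β u p.1 p.2) =
      fun p => Real.exp (-β * p.2) * ∫ s in (0 : ℝ)..p.2, h (p.1 - p.2 • a, s) := by
    ext ⟨x, t⟩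
    rw [characteristicIntegral_eq_exp_mul]
    congr 2 with s
    simp only [h, sub_smul]
    abel_nf
  rw [hfactor]
  exact (contDiff_const.mul contDiff_snd).exp.mul
    ((contDiff_one_parametric_primitive_of_contDiff hh 0).comp hΦ)

theorem hasLineDerivAt_characteristicIntegral (a : E) (β : ℝ) {u : E → ℝ → ℝ}
    (hu : Continuous (fun p : E × ℝ => u p.1 p.2)) (x : E) (t : ℝ) :
    HasLineDerivAt ℝ (fun p : E × ℝ => characteristicIntegral a β u p.1 p.2)
      (u x t - β * characteristicIntegral a β u x t) (x, t) (a, 1) := by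
  set g : ℝ → ℝ := fun s => Real.exp (β * s) * u (x - (t - s) • a) s
  have hg : Continuous g := by fun_prop
  have hline : ∀ r : ℝ, characteristicIntegral a β u (x + r • a) (t + r) =
      Real.exp (-β * (t + r)) * ∫ s in (0 : ℝ)..t + r, g s := by
    intro r
    rw [characteristicIntegral_eq_exp_mul]
    congr 2 with s
    simp only [g, sub_smul, add_smul]
    abel_nf
  have hφ : HasDerivAt (fun τ => Real.exp (-β * τ) * ∫ s in (0 : ℝ)..τ, g s)
      (Real.exp (-β * t) * (-β) * (∫ s in (0 : ℝ)..t, g s) + Real.exp (-β * t) * g t) t :=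
    (((hasDerivAt_id t).const_mul (-β)).exp.congr_deriv (by simp [mul_comm])).mul
      (hg.integral_hasStrictDerivAt 0 t).hasDerivAt
  have hg_t : Real.exp (-β * t) * g t = u x t := by
    simp only [g, sub_self, zero_smul, sub_zero, ← mul_assoc, ← Real.exp_add, neg_mul,
      neg_add_cancel, Real.exp_zero, one_mul]
  unfold HasLineDerivAt
  simp only [Prod.smul_mk, Prod.mk_add_mk, smul_eq_mul, mul_one, hline]
  convert HasDerivAt.comp_const_add t 0 (by rwa [add_zero]) using 1
  rw [characteristicIntegral_eq_exp_mul, ← hg_t]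
  ring

end Characteristic

theorem dememorization_transport_identity_general
    (d : ℕ) (a' : EuclideanSpace ℝ (Fin d)) (β : ℝ)
    (u : EuclideanSpace ℝ (Fin d) → ℝ → ℝ)
    (hu : ContDiff ℝ 1 (fun p : EuclideanSpace ℝ (Fin d) × ℝ => u p.1 p.2))
    (v : EuclideanSpace ℝ (Fin d) → ℝ → ℝ)
    (hv : ∀ x t, v x t =
      ∫ s in (0 : ℝ)..t, Real.exp (-β * (t - s)) * u (x - (t - s) • a') s) :
    (∀ x t, DifferentiableAt ℝ (fun y => v y t) x) ∧
    (∀ x t, DifferentiableAt ℝ (v x) t) ∧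
    (∀ x t, deriv (v x) t + β * v x t + ⟪a', gradient (fun y => v y t) x⟫ = u x t) := by
  obtain rfl : v = characteristicIntegral a' β u := funext₂ hv
  have hD (x t) := ((contDiff_characteristicIntegral a' β hu).differentiable one_ne_zero
    (x, t)).hasFDerivAt
  refine ⟨fun x t => ?_, fun x t => ?_, fun x t => ?_⟩
  · exact ((hD x t).comp x (hasFDerivAt_prodMk_left (𝕜 := ℝ) x t)).differentiableAt
  · exact ((hD x t).comp t (hasFDerivAt_prodMk_right (𝕜 := ℝ) x t)).differentiableAt
  · rw [add_right_comm, deriv_add_inner_gradient_eq_of_hasFDerivAt (hD x t) a',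
      ((hD x t).hasLineDerivAt (a', 1)).unique
        (hasLineDerivAt_characteristicIntegral a' β hu.continuous x t)]
    ring

/-- Dememorization identity: the auxiliary variable
`v(x,t) = ∫₀ᵗ e^{-β(t-s)} u(x - (t-s)a', s) ds` satisfies the memory-free
transport–reaction equation `∂ₜv + βv + a'·∇ₓv = u`. -/
theorem dememorization_transport_identity
    (d : ℕ) (hd : 0 < d) (a' : EuclideanSpace ℝ (Fin d)) (β : ℝ)
    (u : EuclideanSpace ℝ (Fin d) → ℝ → ℝ)
    (hu : ContDiff ℝ 1 (fun p : EuclideanSpace ℝ (Fin d) × ℝ => u p.1 p.2))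
    (v : EuclideanSpace ℝ (Fin d) → ℝ → ℝ)
    (hv : ∀ x t, v x t =
      ∫ s in (0 : ℝ)..t, Real.exp (-β * (t - s)) * u (x - (t - s) • a') s) :
    (∀ x t, DifferentiableAt ℝ (fun y => v y t) x) ∧
    (∀ x t, DifferentiableAt ℝ (v x) t) ∧
    (∀ x t, deriv (v x) t + β * v x t + ⟪a', gradient (fun y => v y t) x⟫ = u x t) :=
  dememorization_transport_identity_general d a' β u hu v hv
end

section
/- Dememorization identity (diffusion / memory term). Let d and M be positive integers, ã ∈ ℝᵈ a constant vector, β₁, …, β_M ∈ ℝ, and for each i let κᵢ : ℝᵈ → ℝ^{d×d} be a continuously differentiable matrix-valued function. Let u : ℝᵈ × ℝ → ℝ be twice continuously differentiable, and define vᵢ(x,t) := ∫₀ᵗ e^{−βᵢ(t−s)} u(x − (t−s)ã, s) ds for i = 1, …, M. Then for every x ∈ ℝᵈ and t ∈ ℝ, Σᵢ₌₁ᴹ ∇ₓ·(κᵢ(x) ∇ₓ vᵢ(x,t)) = ∫₀ᵗ ∇ₓ·( A(x,t,s) (∇u)(x − (t−s)ã, s) ) ds, where A(x,t,s) := Σᵢ₌₁ᴹ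 κᵢ(x) e^{−βᵢ(t−s)}. Consequently, u satisfies the memory equation uₜ + a·∇u = ∫₀ᵗ ∇·(A(x,t,s)∇u(x̃(x,t,s),s)) ds (with x̃(x,t,s) = x − (t−s)ã) if and only if uₜ + a·∇u = Σᵢ₌₁ᴹ ∇·(κᵢ ∇vᵢ). -/
/-!
Everything is linear, so the identity amounts to passing spatial derivatives under `∫₀ᵗ`.
Since `(x, s) ↦ e^{-βᵢ(t-s)} u(x - (t-s)ã, s)` is `C¹`, the gradient of `vᵢ` is
`∫₀ᵗ e^{-βᵢ(t-s)} ∇u(x - (t-s)ã, s) ds`; so `κᵢ∇vᵢ` is again a parameter integral, now of a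
`C¹` field, and its divergence also passes under the integral. Summing over `i` and exchanging
the finite sum with the integral gives the identity. Differentiation under the integral sign is
justified by dominated convergence, the partial derivative being bounded on the compact set
`closedBall x 1 × [a, b]`.
-/

open MeasureTheory

/-- The gradient (vector of partial derivatives) of a scalar function on `ℝᵈ`. -/
noncomputable def gradVec (d : ℕ) (f : (Fin d → ℝ) → ℝ) (x : Fin d → ℝ) : Fin d → ℝ :=
  fun i => fderiv ℝ f x (Pi.single i 1)

/-- The divergence of a vector field on `ℝᵈ`. -/
noncomputable def divVec (d : ℕ) (F : (Fin d → ℝ) → (Fin d → ℝ)) (x : Fin d → ℝ) : ℝ :=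
  ∑ i, fderiv ℝ F x (Pi.single i 1) i

open Function ContinuousLinearMap

section ParametricIntegral

variable {E F : Type*} [NormedAddCommGroup E] [NormedSpace ℝ E]
  [NormedAddCommGroup F] [NormedSpace ℝ F] {f : E → ℝ → F}

theorem hasFDerivAt_slice {y : E} {s : ℝ} (hf : DifferentiableAt ℝ (uncurry f) (y, s)) :
    HasFDerivAt (fun z => f z s) ((fderiv ℝ (uncurry f) (y, s)).comp (inl ℝ E ℝ)) y :=
  hf.hasFDerivAt.comp (f := fun z : E => (z, s)) y (hasFDerivAt_prodMk_left y s)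

theorem contDiff_fderiv_slice {n : WithTop ℕ∞} (hf : ContDiff ℝ (n + 1) (uncurry f)) :
    ContDiff ℝ n fun p : E × ℝ => fderiv ℝ (fun z => f z p.2) p.1 := by
  have hslice : ∀ p : E × ℝ, fderiv ℝ (fun z => f z p.2) p.1 =
      (fderiv ℝ (uncurry f) p).comp (inl ℝ E ℝ) := fun p =>
    (hasFDerivAt_slice (hf.differentiable (by simp) p)).fderiv
  simp only [hslice]
  exact (hf.fderiv_right le_rfl).clm_comp contDiff_const

variable [ProperSpace E]

theorem hasFDerivAt_intervalIntegral_of_contDiff (hf : ContDiff ℝ 1 (uncurry f)) (a b : ℝ)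
    (x : E) :
    HasFDerivAt (fun y => ∫ s in a..b, f y s)
      (∫ s in a..b, fderiv ℝ (fun y => f y s) x) x := by
  have hf' := contDiff_fderiv_slice (n := 0) hf
  obtain ⟨K, hK⟩ := ((isCompact_closedBall x 1).prod isCompact_uIcc).exists_bound_of_continuousOn
    hf'.continuous.continuousOn
  exact intervalIntegral.hasFDerivAt_integral_of_dominated_of_fderiv_le
    (bound := fun _ => K) (Metric.ball_mem_nhds x one_pos)
    (.of_forall fun y => (hf.continuous.comp (.prodMk_right y)).aestronglyMeasurable)
    ((hf.continuous.comp (.prodMk_right x)).intervalIntegrable _ _)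
    ((hf'.continuous.comp (.prodMk_right x)).aestronglyMeasurable)
    (.of_forall fun s hs y hy =>
      hK (y, s) ⟨Metric.ball_subset_closedBall hy, Set.uIoc_subset_uIcc hs⟩)
    intervalIntegrable_const
    (.of_forall fun s _ y _ =>
      (hasFDerivAt_slice (hf.differentiable one_ne_zero (y, s))).differentiableAt.hasFDerivAt)

theorem fderiv_intervalIntegral_apply (hf : ContDiff ℝ 1 (uncurry f)) (a b : ℝ) (x v : E) :
    fderiv ℝ (fun y => ∫ s in a..b, f y s) x v = ∫ s in a..b, fderiv ℝ (fun y => f y s) x v := by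
  rw [(hasFDerivAt_intervalIntegral_of_contDiff hf a b x).fderiv,
    intervalIntegral_apply (φ := fun s => fderiv ℝ (fun y => f y s) x)
      (((contDiff_fderiv_slice (n := 0) hf).continuous.comp (.prodMk_right x)).intervalIntegrable _ _)]

end ParametricIntegral

section VectorCalculus

variable {d : ℕ}

theorem divVec_eq_sum_fderiv_apply {F : (Fin d → ℝ) → Fin d → ℝ} {x : Fin d → ℝ}
    (hF : ∀ j, DifferentiableAt ℝ (fun y => F y j) x) :
    divVec d F x = ∑ j, fderiv ℝ (fun y => F y j) x (Pi.single j 1) := by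
  simp [divVec, fderiv_pi hF]

theorem divVec_sum {ι : Type*} (s : Finset ι) {F : ι → (Fin d → ℝ) → Fin d → ℝ}
    {x : Fin d → ℝ} (hF : ∀ i ∈ s, DifferentiableAt ℝ (F i) x) :
    divVec d (fun y => ∑ i ∈ s, F i y) x = ∑ i ∈ s, divVec d (F i) x := by
  simp only [divVec, fderiv_fun_sum hF, sum_apply, Finset.sum_apply]
  exact Finset.sum_comm

theorem continuous_divVec_slice {F : (Fin d → ℝ) → ℝ → Fin d → ℝ}
    (hF : ContDiff ℝ 1 (uncurry F)) (x : Fin d → ℝ) :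
    Continuous fun s => divVec d (fun y => F y s) x :=
  continuous_finsetSum _ fun j _ => continuous_apply j |>.comp <|
    ((contDiff_fderiv_slice (n := 0) hF).continuous.comp (.prodMk_right x)).clm_apply
      continuous_const

theorem gradVec_intervalIntegral {f : (Fin d → ℝ) → ℝ → ℝ} (hf : ContDiff ℝ 1 (uncurry f))
    (a b : ℝ) (x : Fin d → ℝ) (k : Fin d) :
    gradVec d (fun y => ∫ s in a..b, f y s) x k = ∫ s in a..b, gradVec d (fun y => f y s) x k :=
  fderiv_intervalIntegral_apply hf a b x _

theorem divVec_intervalIntegral {F : (Fin d → ℝ) → ℝ → Fin d → ℝ}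
    (hF : ContDiff ℝ 1 (uncurry F)) (a b : ℝ) (x : Fin d → ℝ) :
    divVec d (fun y j => ∫ s in a..b, F y s j) x = ∫ s in a..b, divVec d (fun y => F y s) x := by
  have hFj : ∀ j, ContDiff ℝ 1 (uncurry fun y s => F y s j) := fun j =>
    (contDiff_apply ℝ ℝ j).comp hF
  rw [divVec_eq_sum_fderiv_apply fun j =>
    (hasFDerivAt_intervalIntegral_of_contDiff (hFj j) a b x).differentiableAt]
  simp only [fderiv_intervalIntegral_apply (hFj _)]
  rw [← intervalIntegral.integral_finsetSum]
  · refine intervalIntegral.integral_congr fun s _ => ?_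
    rw [divVec_eq_sum_fderiv_apply fun j =>
      (hasFDerivAt_slice ((hFj j).differentiable one_ne_zero (x, s))).differentiableAt]
  · exact fun j _ => (((contDiff_fderiv_slice (n := 0) (hFj j)).continuous.comp
      (.prodMk_right x)).clm_apply continuous_const).intervalIntegrable _ _

theorem sum_divVec_intervalIntegral {ι : Type*} (s : Finset ι)
    {F : ι → (Fin d → ℝ) → ℝ → Fin d → ℝ} (hF : ∀ i ∈ s, ContDiff ℝ 1 (uncurry (F i)))
    (a b : ℝ) (x : Fin d → ℝ) :
    ∑ i ∈ s, divVec d (fun y j => ∫ r in a..b, F i y r j) x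
      = ∫ r in a..b, divVec d (fun y => ∑ i ∈ s, F i y r) x := by
  calc _ = ∑ i ∈ s, ∫ r in a..b, divVec d (fun y => F i y r) x :=
        Finset.sum_congr rfl fun i hi => divVec_intervalIntegral (hF i hi) a b x
    _ = ∫ r in a..b, ∑ i ∈ s, divVec d (fun y => F i y r) x :=
        (intervalIntegral.integral_finsetSum fun i hi =>
          (continuous_divVec_slice (hF i hi) x).intervalIntegrable _ _).symm
    _ = _ := intervalIntegral.integral_congr fun r _ => by
        rw [divVec_sum _ fun i hi =>
          (hasFDerivAt_slice ((hF i hi).differentiable one_ne_zero (x, r))).differentiableAt]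

theorem gradVec_const_mul_comp_sub {f : (Fin d → ℝ) → ℝ} {y w : Fin d → ℝ}
    (hf : DifferentiableAt ℝ f (y - w)) (c : ℝ) :
    gradVec d (fun z => c * f (z - w)) y = c • gradVec d f (y - w) := by
  ext k
  simp [gradVec, fderiv_const_mul ((differentiableAt_comp_sub w).2 hf), fderiv_comp_sub]

end VectorCalculus

section Dememorization

variable {d : ℕ}

theorem contDiff_gradVec_slice {n : WithTop ℕ∞} {u : (Fin d → ℝ) → ℝ → ℝ}
    (hu : ContDiff ℝ (n + 1) (uncurry u)) (k : Fin d) :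
    ContDiff ℝ n fun p : (Fin d → ℝ) × ℝ => gradVec d (fun z => u z p.2) p.1 k :=
  (contDiff_fderiv_slice hu).clm_apply contDiff_const

/-- `κᵢ(y) e^{-βᵢ(t-s)} ∇u(x̃(y,t,s), s)`, the `i`-th summand of the flux `A ∇u(x̃, s)`. -/
noncomputable def memoryModeFlux (κi : (Fin d → ℝ) → Fin d → Fin d → ℝ) (βi : ℝ)
    (a' : Fin d → ℝ) (u : (Fin d → ℝ) → ℝ → ℝ) (t : ℝ) (y : Fin d → ℝ) (s : ℝ) : Fin d → ℝ :=
  fun j => ∑ k, Real.exp (-βi * (t - s)) * κi y j k *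
    gradVec d (fun z => u z s) (y - (t - s) • a') k

variable {κi : (Fin d → ℝ) → Fin d → Fin d → ℝ} {βi : ℝ} {a' : Fin d → ℝ}
  {u : (Fin d → ℝ) → ℝ → ℝ}

theorem contDiff_memoryModeFlux (hκi : ∀ j k, ContDiff ℝ 1 fun x => κi x j k)
    (hu : ContDiff ℝ 2 (uncurry u)) (t : ℝ) :
    ContDiff ℝ 1 (uncurry (memoryModeFlux κi βi a' u t)) := by
  refine contDiff_pi.2 fun j => ?_
  simp only [uncurry, memoryModeFlux]
  refine ContDiff.sum fun k _ => ?_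
  have hgrad := (contDiff_gradVec_slice (n := 1) hu k).comp
    (f := fun p : (Fin d → ℝ) × ℝ => (p.1 - (t - p.2) • a', p.2)) (by fun_prop)
  exact ((by fun_prop : ContDiff ℝ 1 fun p : (Fin d → ℝ) × ℝ => Real.exp (-βi * (t - p.2))).mul
    ((hκi j k).comp contDiff_fst)).mul hgrad

theorem gradVec_dememorized (hu : ContDiff ℝ 1 (uncurry u)) (t : ℝ) (y : Fin d → ℝ) :
    gradVec d
        (fun z => ∫ s in (0 : ℝ)..t, Real.exp (-βi * (t - s)) * u (z - (t - s) • a') s) y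
      = fun k => ∫ s in (0 : ℝ)..t,
          Real.exp (-βi * (t - s)) * gradVec d (fun z => u z s) (y - (t - s) • a') k := by
  have hintegrand : ContDiff ℝ 1
      (uncurry fun z s => Real.exp (-βi * (t - s)) * u (z - (t - s) • a') s) :=
    (by fun_prop : ContDiff ℝ 1 fun p : (Fin d → ℝ) × ℝ => Real.exp (-βi * (t - p.2))).mul
      (hu.comp (f := fun p : (Fin d → ℝ) × ℝ => (p.1 - (t - p.2) • a', p.2)) (by fun_prop))
  ext k
  rw [gradVec_intervalIntegral hintegrand]
  refine intervalIntegral.integral_congr fun s _ => ?_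
  rw [gradVec_const_mul_comp_sub
    (hasFDerivAt_slice (hu.differentiable one_ne_zero (y - (t - s) • a', s))).differentiableAt]
  rfl

theorem sum_mul_gradVec_dememorized (hu : ContDiff ℝ 2 (uncurry u)) (t : ℝ)
    (y : Fin d → ℝ) (j : Fin d) :
    ∑ k, κi y j k * gradVec d
        (fun z => ∫ s in (0 : ℝ)..t, Real.exp (-βi * (t - s)) * u (z - (t - s) • a') s) y k
      = ∫ s in (0 : ℝ)..t, memoryModeFlux κi βi a' u t y s j := by
  have hcont : ∀ k, Continuous fun s =>
      Real.exp (-βi * (t - s)) * κi y j k * gradVec d (fun z => u z s) (y - (t - s) • a') k :=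
    fun k => ((by fun_prop : Continuous fun s => Real.exp (-βi * (t - s))).mul continuous_const).mul
      ((contDiff_gradVec_slice (n := 1) hu k).continuous.comp
        (f := fun s : ℝ => (y - (t - s) • a', s)) (by fun_prop))
  unfold memoryModeFlux
  rw [gradVec_dememorized (hu.of_le one_le_two),
    intervalIntegral.integral_finsetSum fun k _ => (hcont k).intervalIntegrable _ _]
  refine Finset.sum_congr rfl fun k _ => ?_
  rw [← intervalIntegral.integral_const_mul]
  exact intervalIntegral.integral_congr fun s _ => by ring

theorem sum_memoryModeFlux {M : ℕ} (κ : Fin M → (Fin d → ℝ) → Fin d → Fin d → ℝ)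
    (β : Fin M → ℝ) (a' : Fin d → ℝ) (u : (Fin d → ℝ) → ℝ → ℝ) (t : ℝ) (y : Fin d → ℝ)
    (s : ℝ) :
    ∑ i, memoryModeFlux (κ i) (β i) a' u t y s = fun j =>
      ∑ k, (∑ i, Real.exp (-β i * (t - s)) * κ i y j k) *
        gradVec d (fun z => u z s) (y - (t - s) • a') k := by
  ext j
  simp only [memoryModeFlux, Finset.sum_apply, Finset.sum_mul]
  exact Finset.sum_comm

end Dememorization

theorem dememorization_diffusion_identity_general
    (d M : ℕ)
    (a' a : Fin d → ℝ) (β : Fin M → ℝ)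
    (κ : Fin M → (Fin d → ℝ) → Fin d → Fin d → ℝ)
    (hκ : ∀ i j k, ContDiff ℝ 1 (fun x => κ i x j k))
    (u : (Fin d → ℝ) → ℝ → ℝ)
    (hu : ContDiff ℝ 2 (fun p : (Fin d → ℝ) × ℝ => u p.1 p.2))
    (v : Fin M → (Fin d → ℝ) → ℝ → ℝ)
    (hv : ∀ i x t, v i x t =
      ∫ s in (0 : ℝ)..t, Real.exp (-β i * (t - s)) * u (x - (t - s) • a') s) :
    (∀ (x : Fin d → ℝ) (t : ℝ),
      ∑ i, divVec d (fun y j => ∑ k, κ i y j k * gradVec d (fun z => v i z t) y k) x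
        = ∫ s in (0 : ℝ)..t,
            divVec d (fun y j => ∑ k, (∑ i, Real.exp (-β i * (t - s)) * κ i y j k) *
              gradVec d (fun z => u z s) (y - (t - s) • a') k) x) ∧
    (∀ (x : Fin d → ℝ) (t : ℝ),
      (deriv (u x) t + ∑ j, a j * gradVec d (fun z => u z t) x j
          = ∫ s in (0 : ℝ)..t,
              divVec d (fun y j => ∑ k, (∑ i, Real.exp (-β i * (t - s)) * κ i y j k) *
                gradVec d (fun z => u z s) (y - (t - s) • a') k) x)
        ↔ (deriv (u x) t + ∑ j, a j * gradVec d (fun z => u z t) x j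
          = ∑ i, divVec d
              (fun y j => ∑ k, κ i y j k * gradVec d (fun z => v i z t) y k) x)) := by
  have hidentity : ∀ (x : Fin d → ℝ) (t : ℝ),
      ∑ i, divVec d (fun y j => ∑ k, κ i y j k * gradVec d (fun z => v i z t) y k) x
        = ∫ s in (0 : ℝ)..t,
            divVec d (fun y j => ∑ k, (∑ i, Real.exp (-β i * (t - s)) * κ i y j k) *
              gradVec d (fun z => u z s) (y - (t - s) • a') k) x := fun x t => by
    simp only [hv, sum_mul_gradVec_dememorized hu]
    rw [sum_divVec_intervalIntegral _ (fun i _ => contDiff_memoryModeFlux (hκ i) hu t)]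
    simp only [sum_memoryModeFlux]
  exact ⟨hidentity, fun x t => by rw [hidentity x t]⟩

/-- Dememorization identity for the diffusion/memory term: with
`vᵢ(x,t) = ∫₀ᵗ e^{-βᵢ(t-s)} u(x-(t-s)ã, s) ds` one has
`Σᵢ ∇·(κᵢ(x)∇vᵢ(x,t)) = ∫₀ᵗ ∇·(A(x,t,s)(∇u)(x-(t-s)ã, s)) ds` where
`A(x,t,s) = Σᵢ κᵢ(x)e^{-βᵢ(t-s)}`; consequently, `u` satisfies the memory
equation iff it satisfies the dememorized equation. -/
theorem dememorization_diffusion_identity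
    (d M : ℕ) (hd : 0 < d) (hM : 0 < M)
    (a' a : Fin d → ℝ) (β : Fin M → ℝ)
    (κ : Fin M → (Fin d → ℝ) → Fin d → Fin d → ℝ)
    (hκ : ∀ i j k, ContDiff ℝ 1 (fun x => κ i x j k))
    (u : (Fin d → ℝ) → ℝ → ℝ)
    (hu : ContDiff ℝ 2 (fun p : (Fin d → ℝ) × ℝ => u p.1 p.2))
    (v : Fin M → (Fin d → ℝ) → ℝ → ℝ)
    (hv : ∀ i x t, v i x t =
      ∫ s in (0 : ℝ)..t, Real.exp (-β i * (t - s)) * u (x - (t - s) • a') s) :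
    (∀ (x : Fin d → ℝ) (t : ℝ),
      ∑ i, divVec d (fun y j => ∑ k, κ i y j k * gradVec d (fun z => v i z t) y k) x
        = ∫ s in (0 : ℝ)..t,
            divVec d (fun y j => ∑ k, (∑ i, Real.exp (-β i * (t - s)) * κ i y j k) *
              gradVec d (fun z => u z s) (y - (t - s) • a') k) x) ∧
    (∀ (x : Fin d → ℝ) (t : ℝ),
      (deriv (u x) t + ∑ j, a j * gradVec d (fun z => u z t) x j
          = ∫ s in (0 : ℝ)..t,
              divVec d (fun y j => ∑ k, (∑ i, Real.exp (-β i * (t - s)) * κ i y j k) *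
                gradVec d (fun z => u z s) (y - (t - s) • a') k) x)
        ↔ (deriv (u x) t + ∑ j, a j * gradVec d (fun z => u z t) x j
          = ∑ i, divVec d
              (fun y j => ∑ k, κ i y j k * gradVec d (fun z => v i z t) y k) x)) :=
  dememorization_diffusion_identity_general d M a' a β κ hκ u hu v hv
end

section
/- Sum of the upscaled dispersion coefficients equals the velocity variance. Let n ≥ 2 be an integer, let a₁ < a₂ < … < a_n be real numbers, and let m₁, …, m_n be positive real numbers with Σ_{k=1}^{n} m_k = 1; set ā := Σ_{k=1}^{n} m_k a_k and var(a) := Σ_{k=1}^{n} m_k a_k² − ā². Let u₁, …, u_{n−1} be real numbers with u_i ∈ (a_i, a_{i+1}) and Σ_{k=1}^{n} m_k/(u_i − a_k) = 0 for each i ∈ {1, …, n−1}. Suppose β₁, …, β_{n−1} are real numbers satisfying Σ_{i=1}^{n−1} βᵢ/(uᵢ − a_k) = ā − a_k for every k ∈ {1, …, n}. Then Σ_{i=1}^{n−1} βᵢ = var(a). -/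
/-- The sum of the upscaled dispersion coefficients `βᵢ` equals the variance of
the layered velocity field (indices `0`-based). -/
theorem layered_media_sum_beta_eq_variance
    (n : ℕ) (hn : 2 ≤ n) (a m : ℕ → ℝ)
    (ha : ∀ k l, k < l → l < n → a k < a l)
    (hm : ∀ k < n, 0 < m k)
    (hm1 : ∑ k ∈ Finset.range n, m k = 1)
    (u : ℕ → ℝ)
    (hu : ∀ i < n - 1, u i ∈ Set.Ioo (a i) (a (i + 1)) ∧
      ∑ k ∈ Finset.range n, m k / (u i - a k) = 0)
    (β : ℕ → ℝ)
    (hβ : ∀ k < n, ∑ i ∈ Finset.range (n - 1), β i / (u i - a k)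
      = (∑ k' ∈ Finset.range n, m k' * a k') - a k) :
    ∑ i ∈ Finset.range (n - 1), β i
      = ∑ k ∈ Finset.range n, m k * a k ^ 2
          - (∑ k ∈ Finset.range n, m k * a k) ^ 2 := by
  -- `u i ≠ a k` for all valid indices
  have hne : ∀ i < n - 1, ∀ k < n, u i - a k ≠ 0 := by
    intro i hi k hk
    have hIoo := (hu i hi).1
    rcases lt_or_ge k (i + 1) with h | h
    · have hak : a k ≤ a i := by
        rcases lt_or_eq_of_le (Nat.lt_succ_iff.mp h) with h' | h'
        · exact le_of_lt (ha k i h' (by omega))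
        · exact le_of_eq (by rw [h'])
      have : a k < u i := lt_of_le_of_lt hak hIoo.1
      linarith
    · have hak : a (i + 1) ≤ a k := by
        rcases lt_or_eq_of_le h with h' | h'
        · exact le_of_lt (ha (i + 1) k h' hk)
        · exact le_of_eq (by rw [h'])
      have : u i < a k := lt_of_lt_of_le hIoo.2 hak
      linarith
  -- key: ∑_k m k * a k / (u i - a k) = -1
  have key : ∀ i ∈ Finset.range (n - 1),
      ∑ k ∈ Finset.range n, m k * a k / (u i - a k) = -1 := by
    intro i hi
    rw [Finset.mem_range] at hi
    have h0 := (hu i hi).2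
    have : ∑ k ∈ Finset.range n, m k * a k / (u i - a k)
        = ∑ k ∈ Finset.range n, (u i * (m k / (u i - a k)) - m k) := by
      apply Finset.sum_congr rfl
      intro k hk
      rw [Finset.mem_range] at hk
      have hne' := hne i hi k hk
      field_simp
      ring
    rw [this, Finset.sum_sub_distrib, ← Finset.mul_sum, h0, hm1]
    ring
  -- multiply hβ by m k * a k and sum over k
  have main : ∑ k ∈ Finset.range n,
      m k * a k * ∑ i ∈ Finset.range (n - 1), β i / (u i - a k)
      = ∑ k ∈ Finset.range n,
        m k * a k * ((∑ k' ∈ Finset.range n, m k' * a k') - a k) := by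
    apply Finset.sum_congr rfl
    intro k hk
    rw [Finset.mem_range] at hk
    rw [hβ k hk]
  -- LHS of main equals -∑ β
  have lhs : ∑ k ∈ Finset.range n,
      m k * a k * ∑ i ∈ Finset.range (n - 1), β i / (u i - a k)
      = - ∑ i ∈ Finset.range (n - 1), β i := by
    rw [show (∑ k ∈ Finset.range n,
        m k * a k * ∑ i ∈ Finset.range (n - 1), β i / (u i - a k))
        = ∑ k ∈ Finset.range n, ∑ i ∈ Finset.range (n - 1),
          β i * (m k * a k / (u i - a k)) by
      apply Finset.sum_congr rfl
      intro k _
      rw [Finset.mul_sum]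
      apply Finset.sum_congr rfl
      intro i _
      ring]
    rw [Finset.sum_comm]
    rw [show (∑ i ∈ Finset.range (n - 1), ∑ k ∈ Finset.range n,
        β i * (m k * a k / (u i - a k)))
        = ∑ i ∈ Finset.range (n - 1),
          β i * ∑ k ∈ Finset.range n, m k * a k / (u i - a k) by
      apply Finset.sum_congr rfl
      intro i _
      rw [Finset.mul_sum]]
    rw [← Finset.sum_neg_distrib]
    apply Finset.sum_congr rfl
    intro i hi
    rw [key i hi]
    ring
  -- RHS of main equals ā² - ∑ m a²
  have rhs : ∑ k ∈ Finset.range n,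
      m k * a k * ((∑ k' ∈ Finset.range n, m k' * a k') - a k)
      = (∑ k ∈ Finset.range n, m k * a k) ^ 2
        - ∑ k ∈ Finset.range n, m k * a k ^ 2 := by
    rw [show (∑ k ∈ Finset.range n,
        m k * a k * ((∑ k' ∈ Finset.range n, m k' * a k') - a k))
        = ∑ k ∈ Finset.range n,
          (m k * a k * (∑ k' ∈ Finset.range n, m k' * a k') - m k * a k ^ 2) by
      apply Finset.sum_congr rfl; intro k _; ring]
    rw [Finset.sum_sub_distrib, ← Finset.sum_mul]
    ring
  rw [lhs, rhs] at main
  linarith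
end

section
/- Existence and uniqueness of the upscaled dispersion coefficients. Let n ≥ 2 be an integer, let a₁ < a₂ < … < a_n be real numbers, and let m₁, …, m_n be positive real numbers with Σ_{k=1}^{n} m_k = 1; set ā := Σ_{k=1}^{n} m_k a_k. Let u₁, …, u_{n−1} be real numbers with u_i ∈ (a_i, a_{i+1}) and Σ_{k=1}^{n} m_k/(u_i − a_k) = 0 for each i ∈ {1, …, n−1}. Then there exists a unique tuple (β₁, …, β_{n−1}) of real numbers satisfying the (overdetermined) system Σ_{i=1}^{n−1} βᵢ/(uᵢ − a_k) = ā − a_k for all k ∈ {1, …, n}. -/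
open Polynomial Finset

private lemma lmd_poly_zero {p : ℝ[X]} {s : Finset ℝ} {d : ℕ}
    (hd : p.degree < (d : WithBot ℕ)) (hcard : d ≤ s.card)
    (hroot : ∀ x ∈ s, p.eval x = 0) : p = 0 := by
  rcases eq_or_ne p 0 with h | h
  · exact h
  · refine Polynomial.eq_zero_of_natDegree_lt_card_of_eval_eq_zero' p s hroot ?_
    have := (Polynomial.natDegree_lt_iff_degree_lt (n := d) h).mpr hd
    omega

private lemma lmd_monic_erase (N : ℕ) (v : ℕ → ℝ) (i : ℕ) :
    (∏ j ∈ (range N).erase i, (X - C (v j))).Monic :=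
  monic_prod_of_monic _ _ fun _ _ => monic_X_sub_C _

private lemma lmd_natDegree_erase (N : ℕ) (v : ℕ → ℝ) {i : ℕ} (hi : i ∈ range N) :
    (∏ j ∈ (range N).erase i, (X - C (v j))).natDegree = N - 1 := by
  rw [natDegree_prod_of_monic _ _ fun _ _ => monic_X_sub_C _]
  simp [Finset.card_erase_of_mem hi]

/-- Lagrange interpolation identity, in the concrete form we need. -/
private lemma lmd_interp {N : ℕ} (hN : 1 ≤ N) (v : ℕ → ℝ)
    (hv : ∀ i < N, ∀ j < N, i ≠ j → v i ≠ v j)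
    (p : ℝ[X]) (hp : p.degree < (N : WithBot ℕ)) (x : ℝ) :
    p.eval x = ∑ i ∈ range N,
      (p.eval (v i) / ∏ j ∈ (range N).erase i, (v i - v j)) *
        ∏ j ∈ (range N).erase i, (x - v j) := by
  have hvinj : Set.InjOn v (range N) := by
    intro i hi j hj hij
    by_contra h
    exact hv i (mem_range.1 hi) j (mem_range.1 hj) h hij
  set W : ℝ[X] := p - ∑ i ∈ range N,
      C (p.eval (v i) / ∏ j ∈ (range N).erase i, (v i - v j)) *
        ∏ j ∈ (range N).erase i, (X - C (v j)) with hW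
  have hd : ∀ i ∈ range N, (∏ j ∈ (range N).erase i, (v i - v j)) ≠ 0 := by
    intro i hi
    refine Finset.prod_ne_zero_iff.2 fun j hj => sub_ne_zero.2 ?_
    exact hv i (mem_range.1 hi) j (mem_range.1 (Finset.mem_of_mem_erase hj))
      (Finset.ne_of_mem_erase hj).symm
  have hWdeg : W.degree < (N : WithBot ℕ) := by
    rw [degree_lt_iff_coeff_zero]
    intro m hm
    rw [hW, coeff_sub, finset_sum_coeff]
    have hp0 : p.coeff m = 0 := (degree_lt_iff_coeff_zero p N).1 hp m hm
    rw [hp0]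
    have : ∀ i ∈ range N,
        (C (p.eval (v i) / ∏ j ∈ (range N).erase i, (v i - v j)) *
          ∏ j ∈ (range N).erase i, (X - C (v j))).coeff m = 0 := by
      intro i hi
      rw [coeff_C_mul]
      have : (∏ j ∈ (range N).erase i, (X - C (v j))).natDegree < m := by
        rw [lmd_natDegree_erase N v hi]
        omega
      rw [coeff_eq_zero_of_natDegree_lt this, mul_zero]
    rw [Finset.sum_congr rfl this]
    simp
  have hWroot : ∀ i ∈ range N, W.eval (v i) = 0 := by
    intro i hi
    rw [hW]
    simp only [eval_sub, eval_finset_sum, eval_mul, eval_C, eval_prod, eval_sub, eval_X]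
    rw [Finset.sum_eq_single_of_mem i hi]
    · rw [div_mul_cancel₀ _ (hd i hi)]; ring
    · intro j hj hji
      have : ∏ l ∈ (range N).erase j, (v i - v l) = 0 := by
        refine Finset.prod_eq_zero (Finset.mem_erase.2 ⟨hji.symm, hi⟩) ?_
        simp
      rw [this, mul_zero]
  have hW0 : W = 0 := by
    refine lmd_poly_zero hWdeg (s := (range N).image v) ?_ ?_
    · rw [Finset.card_image_of_injOn hvinj, card_range]
    · intro x hx
      rcases Finset.mem_image.1 hx with ⟨i, hi, rfl⟩
      exact hWroot i hi
  have := sub_eq_zero.1 hW0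
  calc p.eval x = (∑ i ∈ range N,
      C (p.eval (v i) / ∏ j ∈ (range N).erase i, (v i - v j)) *
        ∏ j ∈ (range N).erase i, (X - C (v j))).eval x := by rw [← this]
    _ = _ := by simp [eval_finset_sum, eval_prod]

private lemma lmd_div_aux (x c E : ℝ) (hE : E ≠ 0) : x / (-c) = -(x * E) / (E * c) := by
  rcases eq_or_ne c 0 with rfl | hc
  · simp
  · rw [div_neg, neg_div, neg_inj, mul_comm E c, mul_div_mul_right _ _ hE]

private lemma lmd_div_aux2 (x c E : ℝ) (hc : c ≠ 0) : x * E = -(x / c) * (-c * E) := by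
  field_simp

/-- Existence and uniqueness of the upscaled dispersion coefficients `βᵢ`
solving the overdetermined system `Σᵢ βᵢ/(uᵢ - a_k) = ā - a_k` for all `k < n`
(indices `0`-based). -/
theorem layered_media_dispersion_coefficients_existUnique
    (n : ℕ) (hn : 2 ≤ n) (a m : ℕ → ℝ)
    (ha : ∀ k l, k < l → l < n → a k < a l)
    (hm : ∀ k < n, 0 < m k)
    (hm1 : ∑ k ∈ Finset.range n, m k = 1)
    (u : ℕ → ℝ)
    (hu : ∀ i < n - 1, u i ∈ Set.Ioo (a i) (a (i + 1)) ∧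
      ∑ k ∈ Finset.range n, m k / (u i - a k) = 0) :
    ∃! β : Fin (n - 1) → ℝ, ∀ k < n,
      ∑ i : Fin (n - 1), β i / (u i - a k)
        = (∑ k' ∈ Finset.range n, m k' * a k') - a k := by
  classical
  -- basic order facts
  have hale : ∀ k l, k ≤ l → l < n → a k ≤ a l := by
    intro k l hkl hl
    rcases eq_or_lt_of_le hkl with rfl | h
    · exact le_refl _
    · exact (ha k l h hl).le
  have hua : ∀ i < n - 1, ∀ k < n, u i ≠ a k := by
    intro i hi k hk
    obtain ⟨⟨h1, h2⟩, _⟩ := hu i hi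
    rcases le_or_gt k i with h | h
    · exact ((hale k i h (by omega)).trans_lt h1).ne'
    · exact (h2.trans_le (hale (i + 1) k h hk)).ne
  have hult : ∀ i j, i < j → j < n - 1 → u i < u j := by
    intro i j hij hj
    have h1 := (hu i (by omega)).1.2
    have h2 := (hu j hj).1.1
    have h3 : a (i + 1) ≤ a j := hale (i + 1) j (by omega) (by omega)
    linarith
  have huu : ∀ i < n - 1, ∀ j < n - 1, i ≠ j → u i ≠ u j := by
    intro i hi j hj hij
    rcases lt_or_gt_of_ne hij with h | h
    · exact (hult i j h hj).ne
    · exact (hult j i h hi).ne'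
  have hd_ne : ∀ i < n - 1, (∏ j ∈ (range (n - 1)).erase i, (u i - u j)) ≠ 0 := by
    intro i hi
    refine Finset.prod_ne_zero_iff.2 fun j hj => sub_ne_zero.2 ?_
    exact huu i hi j (mem_range.1 (Finset.mem_of_mem_erase hj)) (Finset.ne_of_mem_erase hj).symm
  set abar : ℝ := ∑ k ∈ range n, m k * a k with habar
  set P : ℝ[X] := ∏ k ∈ range n, (X - C (a k)) with hP
  set q : ℝ[X] := ∏ i ∈ range (n - 1), (X - C (u i)) with hq
  have hqm : q.Monic := monic_prod_of_monic _ _ fun _ _ => monic_X_sub_C _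
  have hqd : q.natDegree = n - 1 := by
    rw [hq, natDegree_prod_of_monic _ _ fun _ _ => monic_X_sub_C _]
    simp
  -- N = q
  have hNq : (∑ k ∈ range n, C (m k) * ∏ l ∈ (range n).erase k, (X - C (a l))) = q := by
    have hdeg : ((∑ k ∈ range n, C (m k) * ∏ l ∈ (range n).erase k, (X - C (a l))) - q).degree
        < ((n - 1 : ℕ) : WithBot ℕ) := by
      rw [degree_lt_iff_coeff_zero]
      intro j hj
      rw [coeff_sub, finset_sum_coeff]
      rcases eq_or_lt_of_le hj with rfl | hj'
      · have h1 : q.coeff (n - 1) = 1 := by rw [← hqd]; exact hqm.coeff_natDegree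
        have h2 : ∀ k ∈ range n,
            (C (m k) * ∏ l ∈ (range n).erase k, (X - C (a l))).coeff (n - 1) = m k := by
          intro k hk
          rw [coeff_C_mul, ← lmd_natDegree_erase n a hk,
            (lmd_monic_erase n a k).coeff_natDegree, mul_one]
        rw [Finset.sum_congr rfl h2, hm1, h1, sub_self]
      · have h1 : q.coeff j = 0 := coeff_eq_zero_of_natDegree_lt (by omega)
        have h2 : ∀ k ∈ range n,
            (C (m k) * ∏ l ∈ (range n).erase k, (X - C (a l))).coeff j = 0 := by
          intro k hk
          rw [coeff_C_mul, coeff_eq_zero_of_natDegree_lt, mul_zero]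
          rw [lmd_natDegree_erase n a hk]; omega
        rw [Finset.sum_congr rfl h2, h1]
        simp
    have hroot : ∀ x ∈ (range (n - 1)).image u,
        ((∑ k ∈ range n, C (m k) * ∏ l ∈ (range n).erase k, (X - C (a l))) - q).eval x = 0 := by
      intro x hx
      rcases Finset.mem_image.1 hx with ⟨i, hi, rfl⟩
      have hi' := mem_range.1 hi
      have hquiz : q.eval (u i) = 0 := by
        rw [hq, eval_prod]
        exact Finset.prod_eq_zero hi (by simp)
      have hNz : (∑ k ∈ range n, C (m k) * ∏ l ∈ (range n).erase k, (X - C (a l))).eval (u i)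
          = 0 := by
        rw [eval_finset_sum]
        have hterm : ∀ k ∈ range n,
            (C (m k) * ∏ l ∈ (range n).erase k, (X - C (a l))).eval (u i)
              = (m k / (u i - a k)) * ∏ l ∈ range n, (u i - a l) := by
          intro k hk
          rw [eval_mul, eval_C, eval_prod]
          simp only [eval_sub, eval_X, eval_C]
          rw [← Finset.mul_prod_erase (range n) (fun l => u i - a l) hk, ← mul_assoc,
            div_mul_cancel₀ _ (sub_ne_zero.2 (hua i hi' k (mem_range.1 hk)))]
        rw [Finset.sum_congr rfl hterm, ← Finset.sum_mul, (hu i hi').2, zero_mul]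
      rw [eval_sub, hNz, hquiz, sub_self]
    have hcard : n - 1 ≤ ((range (n - 1)).image u).card := by
      rw [Finset.card_image_of_injOn, card_range]
      intro i hi j hj hij
      by_contra h
      exact huu i (mem_range.1 hi) j (mem_range.1 hj) h hij
    exact sub_eq_zero.1 (lmd_poly_zero hdeg hcard hroot)
  -- the remainder polynomial r and its degree
  have hrsum : (X - C abar) * q - P
      = ∑ k ∈ range n, C (m k * (a k - abar)) * ∏ l ∈ (range n).erase k, (X - C (a l)) := by
    have hP1 : P = ∑ k ∈ range n, C (m k) * P := by
      calc P = C 1 * P := by rw [map_one, one_mul]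
        _ = (∑ k ∈ range n, C (m k)) * P := by rw [← map_sum, hm1]
        _ = ∑ k ∈ range n, C (m k) * P := by rw [Finset.sum_mul]
    calc (X - C abar) * q - P
        = (∑ k ∈ range n, (X - C abar) * (C (m k) * ∏ l ∈ (range n).erase k, (X - C (a l))))
          - ∑ k ∈ range n, C (m k) * P := by rw [← hNq, Finset.mul_sum, ← hP1]
      _ = ∑ k ∈ range n, ((X - C abar) * (C (m k) * ∏ l ∈ (range n).erase k, (X - C (a l)))
          - C (m k) * P) := by rw [Finset.sum_sub_distrib]
      _ = ∑ k ∈ range n, C (m k * (a k - abar)) * ∏ l ∈ (range n).erase k, (X - C (a l)) := by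
          refine Finset.sum_congr rfl fun k hk => ?_
          have hPk : P = (X - C (a k)) * ∏ l ∈ (range n).erase k, (X - C (a l)) :=
            (Finset.mul_prod_erase _ _ hk).symm
          rw [hPk, C_mul, C_sub]
          ring
  have hrdeg : ((X - C abar) * q - P).degree < ((n - 1 : ℕ) : WithBot ℕ) := by
    rw [hrsum, degree_lt_iff_coeff_zero]
    intro j hj
    rw [finset_sum_coeff]
    rcases eq_or_lt_of_le hj with rfl | hj'
    · have h2 : ∀ k ∈ range n,
          (C (m k * (a k - abar)) * ∏ l ∈ (range n).erase k, (X - C (a l))).coeff (n - 1)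
            = m k * (a k - abar) := by
        intro k hk
        rw [coeff_C_mul, ← lmd_natDegree_erase n a hk,
          (lmd_monic_erase n a k).coeff_natDegree, mul_one]
      rw [Finset.sum_congr rfl h2]
      have h3 : ∀ k ∈ range n, m k * (a k - abar) = m k * a k - m k * abar := fun k _ => by ring
      rw [Finset.sum_congr rfl h3, Finset.sum_sub_distrib, ← Finset.sum_mul, hm1, one_mul,
        ← habar, sub_self]
    · refine Finset.sum_eq_zero fun k hk => ?_
      rw [coeff_C_mul, coeff_eq_zero_of_natDegree_lt, mul_zero]
      rw [lmd_natDegree_erase n a hk]; omega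
  -- evaluations
  have hPak : ∀ k < n, P.eval (a k) = 0 := by
    intro k hk
    rw [hP, eval_prod]
    exact Finset.prod_eq_zero (mem_range.2 hk) (by simp)
  have hqak : ∀ k < n, q.eval (a k) ≠ 0 := by
    intro k hk
    rw [hq, eval_prod]
    simp only [eval_sub, eval_X, eval_C]
    exact Finset.prod_ne_zero_iff.2 fun j hj =>
      sub_ne_zero.2 (hua j (mem_range.1 hj) k hk).symm
  have hrui : ∀ i < n - 1, ((X - C abar) * q - P).eval (u i) = -(P.eval (u i)) := by
    intro i hi
    have hquiz : q.eval (u i) = 0 := by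
      rw [hq, eval_prod]
      exact Finset.prod_eq_zero (mem_range.2 hi) (by simp)
    simp [hquiz]
  -- the key existence identity, over `range (n-1)`
  have key : ∀ k < n, ∑ i ∈ range (n - 1),
      (-(P.eval (u i)) / ∏ j ∈ (range (n - 1)).erase i, (u i - u j)) / (u i - a k)
        = abar - a k := by
    intro k hk
    have hinterp := lmd_interp (N := n - 1) (by omega) u
      (fun i hi j hj hij => huu i hi j hj hij) ((X - C abar) * q - P) hrdeg (a k)
    have hterm : ∀ i ∈ range (n - 1),
        (-(P.eval (u i)) / ∏ j ∈ (range (n - 1)).erase i, (u i - u j)) / (u i - a k)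
          = -((((X - C abar) * q - P).eval (u i) / ∏ j ∈ (range (n - 1)).erase i, (u i - u j))
              * ∏ j ∈ (range (n - 1)).erase i, (a k - u j)) / q.eval (a k) := by
      intro i hi
      have hi' := mem_range.1 hi
      have h1 : u i - a k ≠ 0 := sub_ne_zero.2 (hua i hi' k hk)
      have h2 : q.eval (a k) = (∏ j ∈ (range (n - 1)).erase i, (a k - u j)) * (a k - u i) := by
        rw [hq, eval_prod]
        simp only [eval_sub, eval_X, eval_C]
        exact (Finset.prod_erase_mul _ _ hi).symm
      have hE : (∏ j ∈ (range (n - 1)).erase i, (a k - u j)) ≠ 0 := by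
        refine Finset.prod_ne_zero_iff.2 fun j hj => sub_ne_zero.2 ?_
        exact (hua j (mem_range.1 (Finset.mem_of_mem_erase hj)) k hk).symm
      rw [hrui i hi', h2, ← neg_sub (a k) (u i)]
      exact lmd_div_aux _ _ _ hE
    rw [Finset.sum_congr rfl hterm, ← Finset.sum_div, Finset.sum_neg_distrib, ← hinterp]
    have hrak : ((X - C abar) * q - P).eval (a k) = (a k - abar) * q.eval (a k) := by
      simp [hPak k hk]
    rw [hrak, neg_div, mul_div_assoc, div_self (hqak k hk), mul_one, neg_sub]
  -- uniqueness core
  have huniq : ∀ γ : ℕ → ℝ, (∀ k < n, ∑ i ∈ range (n - 1), γ i / (u i - a k) = 0) →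
      ∀ i < n - 1, γ i = 0 := by
    intro γ hγ i hi
    set S : ℝ[X] := ∑ l ∈ range (n - 1), C (γ l) * ∏ j ∈ (range (n - 1)).erase l, (X - C (u j))
      with hS
    have hSdeg : S.degree < ((n - 1 : ℕ) : WithBot ℕ) := by
      rw [degree_lt_iff_coeff_zero]
      intro j hj
      rw [hS, finset_sum_coeff]
      refine Finset.sum_eq_zero fun l hl => ?_
      rw [coeff_C_mul, coeff_eq_zero_of_natDegree_lt, mul_zero]
      rw [lmd_natDegree_erase _ _ hl]; omega
    have hSroot : ∀ x ∈ (range n).image a, S.eval x = 0 := by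
      intro x hx
      rcases Finset.mem_image.1 hx with ⟨k, hk, rfl⟩
      have hk' := mem_range.1 hk
      have hterm : ∀ l ∈ range (n - 1),
          (C (γ l) * ∏ j ∈ (range (n - 1)).erase l, (X - C (u j))).eval (a k)
            = -(γ l / (u l - a k)) * q.eval (a k) := by
        intro l hl
        rw [eval_mul, eval_C, eval_prod]
        simp only [eval_sub, eval_X, eval_C]
        have h2 : q.eval (a k) = (a k - u l) * ∏ j ∈ (range (n - 1)).erase l, (a k - u j) := by
          rw [hq, eval_prod]
          simp only [eval_sub, eval_X, eval_C]
          exact (Finset.mul_prod_erase _ _ hl).symm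
        have h1 : u l - a k ≠ 0 := sub_ne_zero.2 (hua l (mem_range.1 hl) k hk')
        rw [h2, ← neg_sub (u l) (a k)]
        exact lmd_div_aux2 _ _ _ h1
      rw [hS, eval_finset_sum, Finset.sum_congr rfl hterm, ← Finset.sum_mul,
        Finset.sum_neg_distrib, hγ k hk', neg_zero, zero_mul]
    have hcard : n - 1 ≤ ((range n).image a).card := by
      have : ((range n).image a).card = n := by
        rw [Finset.card_image_of_injOn, card_range]
        intro i hi j hj hij
        by_contra h
        rcases lt_or_gt_of_ne h with hlt | hlt
        · exact (ha i j hlt (mem_range.1 hj)).ne hij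
        · exact (ha j i hlt (mem_range.1 hi)).ne hij.symm
      omega
    have hS0 : S = 0 := lmd_poly_zero hSdeg hcard hSroot
    have hSui : S.eval (u i) = γ i * ∏ j ∈ (range (n - 1)).erase i, (u i - u j) := by
      rw [hS, eval_finset_sum]
      rw [Finset.sum_eq_single_of_mem i (mem_range.2 hi)]
      · rw [eval_mul, eval_C, eval_prod]
        simp only [eval_sub, eval_X, eval_C]
      · intro l hl hli
        rw [eval_mul, eval_prod]
        have : ∏ j ∈ (range (n - 1)).erase l, ((X : ℝ[X]) - C (u j)).eval (u i) = 0 := by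
          refine Finset.prod_eq_zero (Finset.mem_erase.2 ⟨hli.symm, mem_range.2 hi⟩) ?_
          simp
        rw [this, mul_zero]
    rw [hS0] at hSui
    simp only [eval_zero] at hSui
    exact (mul_eq_zero.1 hSui.symm).resolve_right (hd_ne i hi)
  -- assemble
  refine ⟨fun i => -(P.eval (u ↑i)) / ∏ j ∈ (range (n - 1)).erase ↑i, (u ↑i - u j), ?_, ?_⟩
  · intro k hk
    rw [Fin.sum_univ_eq_sum_range
      (fun i => (-(P.eval (u i)) / ∏ j ∈ (range (n - 1)).erase i, (u i - u j)) / (u i - a k))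
      (n - 1)]
    exact key k hk
  · intro β hβ
    funext i
    have hγ : ∀ k < n, ∑ l ∈ range (n - 1),
        (fun j => if h : j < n - 1 then
            β ⟨j, h⟩ - (-(P.eval (u j)) / ∏ j' ∈ (range (n - 1)).erase j, (u j - u j')) else 0) l
          / (u l - a k) = 0 := by
      intro k hk
      rw [← Fin.sum_univ_eq_sum_range
        (fun l => (if h : l < n - 1 then
            β ⟨l, h⟩ - (-(P.eval (u l)) / ∏ j' ∈ (range (n - 1)).erase l, (u l - u j')) else 0)
          / (u l - a k)) (n - 1)]
      have : ∀ l : Fin (n - 1),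
          (if h : (l : ℕ) < n - 1 then
              β ⟨l, h⟩ - (-(P.eval (u l)) / ∏ j' ∈ (range (n - 1)).erase l, (u l - u j')) else 0)
            / (u l - a k)
          = β l / (u l - a k)
            - (-(P.eval (u l)) / ∏ j' ∈ (range (n - 1)).erase l, (u l - u j')) / (u l - a k) := by
        intro l
        rw [dif_pos l.isLt, sub_div]
      rw [Finset.sum_congr rfl fun l _ => this l, Finset.sum_sub_distrib, hβ k hk]
      have hex : ∑ l : Fin (n - 1),
          (-(P.eval (u ↑l)) / ∏ j' ∈ (range (n - 1)).erase ↑l, (u ↑l - u j')) / (u ↑l - a k)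
            = abar - a k := by
        rw [Fin.sum_univ_eq_sum_range
          (fun l => (-(P.eval (u l)) / ∏ j' ∈ (range (n - 1)).erase l, (u l - u j')) / (u l - a k))
          (n - 1)]
        exact key k hk
      rw [hex, habar, sub_self]
    have h0 := huniq _ hγ ↑i i.isLt
    simp only [dif_pos i.isLt] at h0
    have : β ⟨↑i, i.isLt⟩ = β i := by congr
    rw [this] at h0
    exact sub_eq_zero.1 h0
end

section
/- Energy stability of the coupled dememorized system with convection for the permeability κ = κ₁₁ ã⊗ã. Let d be a positive integer and T > 0. Let ã, a : ℝᵈ → ℝᵈ be continuously differentiable divergence-free vector fields, let κ₁₁ : ℝᵈ → ℝ be continuously differentiable with κ₁₁(x) ≥ 0 for all x, and let β ≥ 0 satisfy β κ₁₁(x) + ã(x)·∇κ₁₁(x) ≥ 0 for all x ∈ ℝᵈ. Let u, v : ℝᵈ × [0,T] → ℝ be twice continuously differentiable and suppose there is a compact set K ⊂ ℝᵈ such that u(·,t) and v(·,t) vanish outside K for every t ∈ [0,T]. Assume u and v satisfy the coupled system: ∂ₜv(x,t) − ã(x)·∇v(x,t) + β v(x,t) = u(x,t) and ∂ₜu(x,t)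 + a(x)·∇u(x,t) = ∇·( κ₁₁(x) (ã(x)·∇v(x,t)) ã(x) ) for all (x,t) ∈ ℝᵈ × [0,T]. Then ∫_{ℝᵈ} u(x,T)² dx + ∫_{ℝᵈ} κ₁₁(x) (ã(x)·∇v(x,T))² dx ≤ ∫_{ℝᵈ} u(x,0)² dx + ∫_{ℝᵈ} κ₁₁(x) (ã(x)·∇v(x,0))² dx. -/
/-!
With `w = ã·∇v`, the two equations and the commutation `∂ₜ(ã·∇v) = ã·∇(∂ₜv)` give, pointwise,
`∂ₜ(u² + κ w²) = -a·∇(u²) + ã·∇(2uκw + κw²) - w² (ã·∇κ + 2βκ)`.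
A derivative `A·∇g` along a divergence-free field `A` of a compactly supported `g` integrates to
zero (integrate by parts in each coordinate: `∫ Aᵢ ∂ᵢg = -∫ (∂ᵢAᵢ) g`), and
`ã·∇κ + 2βκ ≥ βκ ≥ 0`. Hence the energy has a nonpositive derivative on `(0, T)`.
-/

open RealInnerProductSpace MeasureTheory Function Set Filter Topology

theorem real_inner_gradient_right {F : Type*} [NormedAddCommGroup F] [InnerProductSpace ℝ F]
    [CompleteSpace F] (f : F → ℝ) (x y : F) : ⟪y, gradient f x⟫ = fderiv ℝ f x y := by
  rw [real_inner_comm, ← InnerProductSpace.toDual_apply_apply, toDual_gradient]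

section SpaceTime

variable {E F : Type*} [NormedAddCommGroup E] [NormedSpace ℝ E]
  [NormedAddCommGroup F] [NormedSpace ℝ F]

theorem fderiv_eq_zero_of_forall_notMem {f : E → F} {K : Set E} (hK : IsClosed K)
    (hf : ∀ y ∉ K, f y = 0) {x : E} (hx : x ∉ K) : fderiv ℝ f x = 0 :=
  fderiv_of_notMem_tsupport ℝ fun h => hx (hK.closure_subset_iff.2 (support_subset_iff'.2 hf) h)

variable {f : E → ℝ → F}

theorem ContDiff.of_uncurry_left {n : WithTop ℕ∞} (hf : ContDiff ℝ n (uncurry f)) (t : ℝ) :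
    ContDiff ℝ n fun x => f x t :=
  hf.comp (contDiff_id.prodMk contDiff_const)

theorem hasDerivAt_of_differentiableAt_uncurry {x : E} {t : ℝ}
    (hf : DifferentiableAt ℝ (uncurry f) (x, t)) :
    HasDerivAt (f x) (fderiv ℝ (uncurry f) (x, t) (0, 1)) t := by
  simpa [comp_def] using hf.hasFDerivAt.comp_hasDerivAt t
    ((hasDerivAt_const t x).prodMk (hasDerivAt_id t))

theorem fderiv_apply_eq_of_differentiableAt_uncurry {x : E} {t : ℝ}
    (hf : DifferentiableAt ℝ (uncurry f) (x, t)) (w : E) :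
    fderiv ℝ (fun y => f y t) x w = fderiv ℝ (uncurry f) (x, t) (w, 0) := by
  have h := hf.hasFDerivAt.comp x (hasFDerivAt_prodMk_left (𝕜 := ℝ) x t)
  rw [show (fun y => f y t) = uncurry f ∘ fun y => (y, t) from rfl, h.fderiv]
  rfl

theorem uncurry_deriv_eq_fderiv_apply (hf : Differentiable ℝ (uncurry f)) :
    uncurry (fun x t => deriv (f x) t) = fun p => fderiv ℝ (uncurry f) p (0, 1) :=
  funext fun p => (hasDerivAt_of_differentiableAt_uncurry (hf p)).deriv

theorem ContDiff.uncurry_deriv {m n : WithTop ℕ∞} (hf : ContDiff ℝ n (uncurry f))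
    (hmn : m + 1 ≤ n) : ContDiff ℝ m (uncurry fun x t => deriv (f x) t) := by
  rw [uncurry_deriv_eq_fderiv_apply
    ((hf.of_le (le_add_self.trans hmn)).differentiable one_ne_zero)]
  exact (hf.fderiv_right hmn).clm_apply contDiff_const

theorem ContDiff.uncurry_fderiv_apply {m n : WithTop ℕ∞} (hf : ContDiff ℝ n (uncurry f))
    (hmn : m + 1 ≤ n) {A : E → E} (hA : ContDiff ℝ m A) :
    ContDiff ℝ m (uncurry fun x t => fderiv ℝ (fun y => f y t) x (A x)) := by
  have hf1 := (hf.of_le (le_add_self.trans hmn)).differentiable one_ne_zero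
  have : (uncurry fun x t => fderiv ℝ (fun y => f y t) x (A x))
      = fun p => fderiv ℝ (uncurry f) p (A p.1, 0) :=
    funext fun p => fderiv_apply_eq_of_differentiableAt_uncurry (hf1 p) _
  rw [this]
  exact (hf.fderiv_right hmn).clm_apply ((hA.comp contDiff_fst).prodMk contDiff_const)

theorem hasDerivAt_fderiv_apply_of_contDiff_uncurry (hf : ContDiff ℝ 2 (uncurry f))
    (x w : E) (t : ℝ) :
    HasDerivAt (fun s => fderiv ℝ (fun y => f y s) x w)
      (fderiv ℝ (fun y => deriv (f y) t) x w) t := by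
  have hf1 : Differentiable ℝ (uncurry f) := hf.differentiable two_ne_zero
  have hf' : Differentiable ℝ (fderiv ℝ (uncurry f)) :=
    (hf.fderiv_right (m := 1) le_rfl).differentiable one_ne_zero
  have hderiv : Differentiable ℝ (uncurry fun x t => deriv (f x) t) :=
    (hf.uncurry_deriv (m := 1) le_rfl).differentiable one_ne_zero
  simp_rw [fderiv_apply_eq_of_differentiableAt_uncurry (hf1 _),
    fderiv_apply_eq_of_differentiableAt_uncurry (hderiv _), uncurry_deriv_eq_fderiv_apply hf1]
  rw [fderiv_clm_apply (hf' _) (differentiableAt_const _)]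
  simp only [fderiv_fun_const, Pi.zero_apply, ContinuousLinearMap.comp_zero, zero_add,
    ContinuousLinearMap.flip_apply]
  rw [second_derivative_symmetric (fun y => (hf1 y).hasFDerivAt) (hf' _).hasFDerivAt]
  exact (hasDerivAt_of_differentiableAt_uncurry (f := fun x t => fderiv ℝ (uncurry f) (x, t))
    (hf' _)).clm_apply (hasDerivAt_const t _) |>.congr_deriv (by simp; rfl)

end SpaceTime

section Integrals

variable {E : Type*} [NormedAddCommGroup E] [NormedSpace ℝ E] [MeasurableSpace E]
  [OpensMeasurableSpace E] {μ : Measure E} [IsFiniteMeasureOnCompacts μ]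

theorem integrable_fderiv_apply {g : E → ℝ} {A : E → E} (hg : ContDiff ℝ 1 g)
    (hgs : HasCompactSupport g) (hA : Continuous A) :
    Integrable (fun x => fderiv ℝ g x (A x)) μ :=
  ((hg.continuous_fderiv one_ne_zero).clm_apply hA).integrable_of_hasCompactSupport
    ((hgs.fderiv ℝ).mono fun x hx h => hx (by simp [h]))

variable {f : E → ℝ → ℝ} {K : Set E}

theorem hasDerivAt_setIntegral_of_contDiff_uncurry (hf : ContDiff ℝ 1 (uncurry f))
    (hK : IsCompact K) (t : ℝ) :
    HasDerivAt (fun s => ∫ x in K, f x s ∂μ) (∫ x in K, deriv (f x) t ∂μ) t := by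
  have hf' : Continuous (uncurry fun x t => deriv (f x) t) :=
    (hf.uncurry_deriv (m := 0) le_rfl).continuous
  obtain ⟨C, hC⟩ := (hK.prod (isCompact_closedBall t 1)).exists_bound_of_continuousOn
    hf'.continuousOn
  refine (hasDerivAt_integral_of_dominated_loc_of_deriv_le (Metric.ball_mem_nhds t one_pos)
    (F := fun s x => f x s) (F' := fun s x => deriv (f x) s) (bound := fun _ => C)
    (.of_forall fun s => ?_) ?_ ?_ ?_ (integrableOn_const (hK.measure_ne_top (μ := μ)))
    (.of_forall fun x s _ => ?_)).2
  · exact (hf.continuous.comp (continuous_id.prodMk continuous_const)).aestronglyMeasurable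
  · exact (hf.continuous.comp (continuous_id.prodMk continuous_const)).continuousOn
      |>.integrableOn_compact hK
  · exact (hf'.comp (continuous_id.prodMk continuous_const)).aestronglyMeasurable
  · exact (ae_restrict_mem hK.measurableSet).mono fun x hx s hs =>
      hC (x, s) ⟨hx, Metric.ball_subset_closedBall hs⟩
  · exact ((hasDerivAt_of_differentiableAt_uncurry
      (hf.differentiable one_ne_zero (x, s))).differentiableAt).hasDerivAt

theorem antitoneOn_integral_of_integral_deriv_nonpos (hf : ContDiff ℝ 1 (uncurry f))
    (hK : IsCompact K) {a b : ℝ} (hsupp : ∀ t ∈ Icc a b, ∀ x ∉ K, f x t = 0)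
    (hderiv : ∀ t ∈ Ioo a b, ∫ x, deriv (f x) t ∂μ ≤ 0) :
    AntitoneOn (fun t => ∫ x, f x t ∂μ) (Icc a b) := by
  have hG := hasDerivAt_setIntegral_of_contDiff_uncurry (μ := μ) hf hK
  have hanti : AntitoneOn (fun t => ∫ x in K, f x t ∂μ) (Icc a b) := by
    refine antitoneOn_of_deriv_nonpos (convex_Icc a b)
      (fun t _ => (hG t).continuousAt.continuousWithinAt)
      (fun t _ => (hG t).differentiableAt.differentiableWithinAt) fun t ht => ?_
    rw [interior_Icc] at ht
    rw [(hG t).deriv, setIntegral_eq_integral_of_forall_compl_eq_zero]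
    · exact hderiv t ht
    · intro x hx
      have hzero : f x =ᶠ[𝓝 t] fun _ => 0 := eventually_of_mem (Ioo_mem_nhds ht.1 ht.2)
        fun s hs => hsupp s (Ioo_subset_Icc_self hs) x hx
      rw [hzero.deriv_eq, deriv_const]
  exact hanti.congr fun t ht => setIntegral_eq_integral_of_forall_compl_eq_zero (hsupp t ht)

end Integrals

section Energy

variable {E : Type*} [NormedAddCommGroup E] [NormedSpace ℝ E]

theorem energy_rate_pointwise_eq {u w κ v : E → ℝ} {x b c : E} (β : ℝ) (hu : DifferentiableAt ℝ u x)
    (hw : DifferentiableAt ℝ w x) (hκ : DifferentiableAt ℝ κ x) (hv : DifferentiableAt ℝ v x)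
    (hvw : fderiv ℝ v x c = w x) :
    2 * u x * (-fderiv ℝ u x b + fderiv ℝ (fun y => κ y * w y) x c)
        + κ x * (2 * w x * fderiv ℝ (fun y => u y + w y - β * v y) x c)
      = fderiv ℝ (fun y => -u y ^ 2) x b
        + fderiv ℝ (fun y => 2 * u y * (κ y * w y) + κ y * w y ^ 2) x c
        - w x ^ 2 * (fderiv ℝ κ x c + 2 * β * κ x) := by
  simp (disch := fun_prop) only [fderiv_fun_mul, add_apply, smul_apply, smul_eq_mul,
    fderiv_fun_sub, fderiv_fun_add, fderiv_fun_const, Pi.zero_apply, smul_zero, add_zero,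
    sub_apply, fderiv_fun_neg, fderiv_fun_pow, Nat.add_one_sub_one, pow_one, nsmul_eq_mul,
    Nat.cast_ofNat, neg_apply, smul_add, hvw]
  ring

/-- The integrand of the energy `‖u(t)‖² + ‖κ^{1/2} (A·∇v)(t)‖²`. -/
noncomputable def energyDensity (κ : E → ℝ) (A : E → E) (u v : E → ℝ → ℝ) (x : E) (t : ℝ) :
    ℝ :=
  u x t ^ 2 + κ x * fderiv ℝ (fun y => v y t) x (A x) ^ 2

variable {κ : E → ℝ} {A : E → E} {u v : E → ℝ → ℝ}

theorem ContDiff.uncurry_energyDensity (hu : ContDiff ℝ 1 (uncurry u))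
    (hv : ContDiff ℝ 2 (uncurry v)) (hκ : ContDiff ℝ 1 κ) (hA : ContDiff ℝ 1 A) :
    ContDiff ℝ 1 (uncurry (energyDensity κ A u v)) :=
  (hu.pow 2).add ((hκ.comp contDiff_fst).mul ((hv.uncurry_fderiv_apply (by norm_num) hA).pow 2))

theorem deriv_energyDensity (hu : Differentiable ℝ (uncurry u)) (hv : ContDiff ℝ 2 (uncurry v))
    (x : E) (t : ℝ) :
    deriv (energyDensity κ A u v x) t = 2 * u x t * deriv (u x) t
      + κ x * (2 * fderiv ℝ (fun y => v y t) x (A x)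
        * fderiv ℝ (fun y => deriv (v y) t) x (A x)) := by
  have hut := (hasDerivAt_of_differentiableAt_uncurry (hu (x, t))).differentiableAt.hasDerivAt
  refine ((hut.pow 2).add (((hasDerivAt_fderiv_apply_of_contDiff_uncurry hv x (A x) t).pow 2)
    |>.const_mul (κ x))).deriv.trans ?_
  simp only [Nat.cast_ofNat, Nat.add_one_sub_one, pow_one]

theorem integral_energyDensity [MeasurableSpace E] [OpensMeasurableSpace E] {μ : Measure E}
    [IsFiniteMeasureOnCompacts μ] {t : ℝ} (hu : Continuous fun x => u x t)
    (hv : ContDiff ℝ 1 fun x => v x t) (hκ : Continuous κ) (hA : Continuous A)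
    (hus : HasCompactSupport fun x => u x t) (hvs : HasCompactSupport fun x => v x t) :
    ∫ x, energyDensity κ A u v x t ∂μ
      = ∫ x, u x t ^ 2 ∂μ + ∫ x, κ x * fderiv ℝ (fun y => v y t) x (A x) ^ 2 ∂μ :=
  integral_add
    ((hu.pow 2).integrable_of_hasCompactSupport (hus.mono fun x hx h => hx (by simp [h])))
    ((hκ.mul (((hv.continuous_fderiv one_ne_zero).clm_apply hA).pow 2))
      |>.integrable_of_hasCompactSupport ((hvs.fderiv ℝ).mono fun x hx h => hx (by simp [h])))

end Energy

section Divergence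

variable {ι : Type*} [Fintype ι] [DecidableEq ι]

local notation "E" => EuclideanSpace ℝ ι

noncomputable def divergence (A : E → E) (x : E) : ℝ :=
  ∑ i, fderiv ℝ A x (EuclideanSpace.single i 1) i

theorem apply_eq_sum_mul_apply_single (L : E →L[ℝ] ℝ) (z : E) :
    L z = ∑ i, z i * L (EuclideanSpace.single i 1) := by
  conv_lhs => rw [← (EuclideanSpace.basisFun ι ℝ).sum_repr z]
  simp

theorem divergence_smul {g : E → ℝ} {A : E → E} {x : E}
    (hg : DifferentiableAt ℝ g x) (hA : DifferentiableAt ℝ A x) :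
    divergence (fun y => g y • A y) x = fderiv ℝ g x (A x) + g x * divergence A x := by
  simp only [divergence, fderiv_fun_smul hg hA, apply_eq_sum_mul_apply_single (fderiv ℝ g x) (A x),
    Finset.mul_sum, ← Finset.sum_add_distrib]
  refine Finset.sum_congr rfl fun i _ => ?_
  simp only [add_apply, smul_apply, PiLp.add_apply,
    PiLp.smul_apply, smul_eq_mul, ContinuousLinearMap.smulRight_apply]
  ring

theorem divergence_smul_of_divergence_eq_zero {g : E → ℝ} {A : E → E} {x : E}
    (hg : DifferentiableAt ℝ g x) (hA : DifferentiableAt ℝ A x) (hdiv : divergence A x = 0) :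
    divergence (fun y => g y • A y) x = fderiv ℝ g x (A x) := by
  rw [divergence_smul hg hA, hdiv, mul_zero, add_zero]

theorem integral_fderiv_apply_eq_zero_of_divergence_eq_zero {g : E → ℝ} {A : E → E}
    (hg : ContDiff ℝ 1 g) (hgs : HasCompactSupport g) (hA : ContDiff ℝ 1 A)
    (hdiv : ∀ x, divergence A x = 0) :
    ∫ x, fderiv ℝ g x (A x) = 0 := by
  have hAi (i : ι) : Continuous fun x => A x i := by fun_prop
  have hA'i (i : ι) : Continuous fun x => fderiv ℝ A x (EuclideanSpace.single i 1) i := by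
    fun_prop
  have hint_left (i : ι) : Integrable fun x => A x i * fderiv ℝ g x (EuclideanSpace.single i 1) :=
    (hAi i).mul ((hg.continuous_fderiv one_ne_zero).clm_apply continuous_const)
      |>.integrable_of_hasCompactSupport (hgs.fderiv_apply ℝ _).mul_left
  have hint_right (i : ι) :
      Integrable fun x => fderiv ℝ A x (EuclideanSpace.single i 1) i * g x :=
    (hA'i i).mul hg.continuous |>.integrable_of_hasCompactSupport hgs.mul_left
  have parts (i : ι) : ∫ x, A x i * fderiv ℝ g x (EuclideanSpace.single i 1)
      = -∫ x, fderiv ℝ A x (EuclideanSpace.single i 1) i * g x :=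
    integral_bilinear_fderiv_right_eq_neg_left_of_integrable
      (B := (ContinuousLinearMap.mul ℝ ℝ).comp (EuclideanSpace.proj i)) (hint_right i)
      (hint_left i) ((hAi i).mul hg.continuous |>.integrable_of_hasCompactSupport hgs.mul_left)
      (fun x _ => hA.differentiable one_ne_zero x) (fun x _ => hg.differentiable one_ne_zero x)
  calc ∫ x, fderiv ℝ g x (A x)
      = ∑ i, ∫ x, A x i * fderiv ℝ g x (EuclideanSpace.single i 1) := by
        simp_rw [apply_eq_sum_mul_apply_single (fderiv ℝ g _) (A _)]
        exact integral_finsetSum _ fun i _ => hint_left i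
    _ = -∫ x, divergence A x * g x := by
        simp_rw [parts, divergence, Finset.sum_mul]
        rw [integral_finsetSum _ fun i _ => hint_right i, Finset.sum_neg_distrib]
    _ = 0 := by simp [hdiv]

theorem integral_energy_rate_eq {u u₁ v v₁ κ : E → ℝ} {a a' : E → E} {β : ℝ}
    (hu : ContDiff ℝ 1 u) (hv : ContDiff ℝ 2 v) (hκ : ContDiff ℝ 1 κ)
    (ha : ContDiff ℝ 1 a) (ha' : ContDiff ℝ 1 a')
    (hdiva : ∀ x, divergence a x = 0) (hdiva' : ∀ x, divergence a' x = 0)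
    (hus : HasCompactSupport u) (hvs : HasCompactSupport v)
    (hv₁ : ∀ x, v₁ x - fderiv ℝ v x (a' x) + β * v x = u x)
    (hu₁ : ∀ x, u₁ x + fderiv ℝ u x (a x)
      = divergence (fun y => (κ y * fderiv ℝ v y (a' y)) • a' y) x) :
    ∫ x, 2 * u x * u₁ x + κ x * (2 * fderiv ℝ v x (a' x) * fderiv ℝ v₁ x (a' x))
      = -∫ x, fderiv ℝ v x (a' x) ^ 2 * (fderiv ℝ κ x (a' x) + 2 * β * κ x) := by
  set w := fun x => fderiv ℝ v x (a' x)
  have hw : ContDiff ℝ 1 w := (hv.fderiv_right (m := 1) le_rfl).clm_apply ha'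
  have hws : HasCompactSupport w := (hvs.fderiv ℝ).mono fun x hx h => hx (by simp [w, h])
  have hws2 : HasCompactSupport fun y => w y ^ 2 := hws.mono fun x hx hwx => hx (by simp [hwx])
  obtain rfl : v₁ = fun x => u x + w x - β * v x := funext fun x => by linarith [hv₁ x]
  have hu₁' (x : E) : u₁ x = -fderiv ℝ u x (a x) + fderiv ℝ (fun y => κ y * w y) x (a' x) := by
    linarith [(hu₁ x).trans (divergence_smul_of_divergence_eq_zero (g := fun y => κ y * w y)
      ((hκ.mul hw).differentiable one_ne_zero x) (ha'.differentiable one_ne_zero x) (hdiva' x))]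
  set q := fun y => -u y ^ 2
  set p := fun y => 2 * u y * (κ y * w y) + κ y * w y ^ 2
  have hq : ContDiff ℝ 1 q := by fun_prop
  have hp : ContDiff ℝ 1 p := by fun_prop
  have hqs : HasCompactSupport q := hus.mono fun x hx hux => hx (by simp [q, hux])
  have hps : HasCompactSupport p :=
    (hus.mul_left (f := fun _ => (2 : ℝ))).mul_right.add (hws2.mul_left (f := κ))
  have hq_int := integrable_fderiv_apply (μ := volume) hq hqs ha.continuous
  have hp_int := integrable_fderiv_apply (μ := volume) hp hps ha'.continuous
  have hdissip : Integrable fun x => w x ^ 2 * (fderiv ℝ κ x (a' x) + 2 * β * κ x) :=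
    (hw.continuous.pow 2).mul ((hκ.continuous_fderiv one_ne_zero).clm_apply ha'.continuous |>.add
      (continuous_const.mul hκ.continuous)) |>.integrable_of_hasCompactSupport hws2.mul_right
  calc _ = ∫ x, fderiv ℝ q x (a x) + fderiv ℝ p x (a' x)
        - w x ^ 2 * (fderiv ℝ κ x (a' x) + 2 * β * κ x) := by
        refine integral_congr_ae (.of_forall fun x => ?_)
        simp only [hu₁']
        exact energy_rate_pointwise_eq β (hu.differentiable one_ne_zero x)
          (hw.differentiable one_ne_zero x) (hκ.differentiable one_ne_zero x)
          (hv.differentiable two_ne_zero x) rfl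
    _ = _ := by
      rw [integral_sub (f := fun x => fderiv ℝ q x (a x) + fderiv ℝ p x (a' x))
          (hq_int.add hp_int) hdissip, integral_add hq_int hp_int,
        integral_fderiv_apply_eq_zero_of_divergence_eq_zero hq hqs ha hdiva,
        integral_fderiv_apply_eq_zero_of_divergence_eq_zero hp hps ha' hdiva', zero_add, zero_sub]

theorem integral_energy_rate_nonpos {u u₁ v v₁ κ : E → ℝ} {a a' : E → E} {β : ℝ}
    (hu : ContDiff ℝ 1 u) (hv : ContDiff ℝ 2 v) (hκ : ContDiff ℝ 1 κ)
    (ha : ContDiff ℝ 1 a) (ha' : ContDiff ℝ 1 a')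
    (hdiva : ∀ x, divergence a x = 0) (hdiva' : ∀ x, divergence a' x = 0)
    (hκ0 : ∀ x, 0 ≤ κ x) (hβ : 0 ≤ β) (hcond : ∀ x, 0 ≤ β * κ x + fderiv ℝ κ x (a' x))
    (hus : HasCompactSupport u) (hvs : HasCompactSupport v)
    (hv₁ : ∀ x, v₁ x - fderiv ℝ v x (a' x) + β * v x = u x)
    (hu₁ : ∀ x, u₁ x + fderiv ℝ u x (a x)
      = divergence (fun y => (κ y * fderiv ℝ v y (a' y)) • a' y) x) :
    ∫ x, 2 * u x * u₁ x + κ x * (2 * fderiv ℝ v x (a' x) * fderiv ℝ v₁ x (a' x)) ≤ 0 := by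
  rw [integral_energy_rate_eq hu hv hκ ha ha' hdiva hdiva' hus hvs hv₁ hu₁]
  exact neg_nonpos.2 <| integral_nonneg fun x => mul_nonneg (sq_nonneg _) (by
    nlinarith [hcond x, mul_nonneg hβ (hκ0 x)])

end Divergence

theorem dememorized_convection_energy_stability_general
    (d : ℕ) (T : ℝ) (hT : 0 < T)
    (a' a : EuclideanSpace ℝ (Fin d) → EuclideanSpace ℝ (Fin d))
    (ha' : ContDiff ℝ 1 a') (ha : ContDiff ℝ 1 a)
    (hdiva' : ∀ x, ∑ i, fderiv ℝ a' x (EuclideanSpace.single i 1) i = 0)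
    (hdiva : ∀ x, ∑ i, fderiv ℝ a x (EuclideanSpace.single i 1) i = 0)
    (κ : EuclideanSpace ℝ (Fin d) → ℝ)
    (hκ : ContDiff ℝ 1 κ) (hκ0 : ∀ x, 0 ≤ κ x)
    (β : ℝ) (hβ : 0 ≤ β)
    (hcond : ∀ x, 0 ≤ β * κ x + ⟪a' x, gradient κ x⟫)
    (u v : EuclideanSpace ℝ (Fin d) → ℝ → ℝ)
    (hu : ContDiff ℝ 2 (fun p : EuclideanSpace ℝ (Fin d) × ℝ => u p.1 p.2))
    (hv : ContDiff ℝ 2 (fun p : EuclideanSpace ℝ (Fin d) × ℝ => v p.1 p.2))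
    (K : Set (EuclideanSpace ℝ (Fin d))) (hK : IsCompact K)
    (hsupp : ∀ t ∈ Set.Icc (0 : ℝ) T, ∀ x ∉ K, u x t = 0 ∧ v x t = 0)
    (heq1 : ∀ x, ∀ t ∈ Set.Icc (0 : ℝ) T,
      deriv (v x) t - ⟪a' x, gradient (fun y => v y t) x⟫ + β * v x t = u x t)
    (heq2 : ∀ x, ∀ t ∈ Set.Icc (0 : ℝ) T,
      deriv (u x) t + ⟪a x, gradient (fun y => u y t) x⟫
        = ∑ i, fderiv ℝ
            (fun y => (κ y * ⟪a' y, gradient (fun z => v z t) y⟫) • a' y) x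
            (EuclideanSpace.single i 1) i) :
    (∫ x, (u x T) ^ 2) + ∫ x, κ x * ⟪a' x, gradient (fun y => v y T) x⟫ ^ 2
      ≤ (∫ x, (u x 0) ^ 2) + ∫ x, κ x * ⟪a' x, gradient (fun y => v y 0) x⟫ ^ 2 := by
  simp only [real_inner_gradient_right] at hcond heq1 heq2 ⊢
  have hu1 : ContDiff ℝ 1 (uncurry u) := hu.of_le one_le_two
  have hslice (t : ℝ) (ht : t ∈ Icc 0 T) :
      HasCompactSupport (fun x => u x t) ∧ HasCompactSupport (fun x => v x t) :=
    ⟨.intro hK fun x hx => (hsupp t ht x hx).1, .intro hK fun x hx => (hsupp t ht x hx).2⟩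
  have hanti := antitoneOn_integral_of_integral_deriv_nonpos (μ := volume)
    (hu1.uncurry_energyDensity hv hκ ha') hK
    (fun t ht x hx => by
      simp [energyDensity, (hsupp t ht x hx).1,
        fderiv_eq_zero_of_forall_notMem hK.isClosed (fun y hy => (hsupp t ht y hy).2) hx])
    fun t ht => by
      have htI := Ioo_subset_Icc_self ht
      simp only [deriv_energyDensity (hu1.differentiable one_ne_zero) hv]
      exact integral_energy_rate_nonpos (u₁ := fun x => deriv (u x) t)
        (v₁ := fun y => deriv (v y) t) (hu1.of_uncurry_left t) (hv.of_uncurry_left t) hκ ha ha'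
        hdiva hdiva' hκ0 hβ hcond (hslice t htI).1 (hslice t htI).2 (heq1 · t htI) (heq2 · t htI)
  have hsplit (t : ℝ) (ht : t ∈ Icc 0 T) := integral_energyDensity (μ := volume) (κ := κ)
    (A := a') (hu.of_uncurry_left t).continuous ((hv.of_le one_le_two).of_uncurry_left t)
    hκ.continuous ha'.continuous (hslice t ht).1 (hslice t ht).2
  rw [← hsplit T (right_mem_Icc.2 hT.le), ← hsplit 0 (left_mem_Icc.2 hT.le)]
  exact hanti (left_mem_Icc.2 hT.le) (right_mem_Icc.2 hT.le) hT.le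

/-- Energy stability of the coupled dememorized system with convection for the
permeability `κ = κ₁₁ ã ⊗ ã`: the energy
`‖u(t)‖²_{L²} + ‖κ₁₁^{1/2}(ã·∇v)(t)‖²_{L²}` at time `T` is bounded by its value
at time `0`, provided `βκ₁₁ + ã·∇κ₁₁ ≥ 0` and the velocity fields are
divergence-free. -/
theorem dememorized_convection_energy_stability
    (d : ℕ) (hd : 0 < d) (T : ℝ) (hT : 0 < T)
    (a' a : EuclideanSpace ℝ (Fin d) → EuclideanSpace ℝ (Fin d))
    (ha' : ContDiff ℝ 1 a') (ha : ContDiff ℝ 1 a)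
    (hdiva' : ∀ x, ∑ i, fderiv ℝ a' x (EuclideanSpace.single i 1) i = 0)
    (hdiva : ∀ x, ∑ i, fderiv ℝ a x (EuclideanSpace.single i 1) i = 0)
    (κ : EuclideanSpace ℝ (Fin d) → ℝ)
    (hκ : ContDiff ℝ 1 κ) (hκ0 : ∀ x, 0 ≤ κ x)
    (β : ℝ) (hβ : 0 ≤ β)
    (hcond : ∀ x, 0 ≤ β * κ x + ⟪a' x, gradient κ x⟫)
    (u v : EuclideanSpace ℝ (Fin d) → ℝ → ℝ)
    (hu : ContDiff ℝ 2 (fun p : EuclideanSpace ℝ (Fin d) × ℝ => u p.1 p.2))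
    (hv : ContDiff ℝ 2 (fun p : EuclideanSpace ℝ (Fin d) × ℝ => v p.1 p.2))
    (K : Set (EuclideanSpace ℝ (Fin d))) (hK : IsCompact K)
    (hsupp : ∀ t ∈ Set.Icc (0 : ℝ) T, ∀ x ∉ K, u x t = 0 ∧ v x t = 0)
    (heq1 : ∀ x, ∀ t ∈ Set.Icc (0 : ℝ) T,
      deriv (v x) t - ⟪a' x, gradient (fun y => v y t) x⟫ + β * v x t = u x t)
    (heq2 : ∀ x, ∀ t ∈ Set.Icc (0 : ℝ) T,
      deriv (u x) t + ⟪a x, gradient (fun y => u y t) x⟫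
        = ∑ i, fderiv ℝ
            (fun y => (κ y * ⟪a' y, gradient (fun z => v z t) y⟫) • a' y) x
            (EuclideanSpace.single i 1) i) :
    (∫ x, (u x T) ^ 2) + ∫ x, κ x * ⟪a' x, gradient (fun y => v y T) x⟫ ^ 2
      ≤ (∫ x, (u x 0) ^ 2) + ∫ x, κ x * ⟪a' x, gradient (fun y => v y 0) x⟫ ^ 2 :=
  dememorized_convection_energy_stability_general d T hT a' a ha' ha hdiva' hdiva κ hκ hκ0 β hβ
    hcond u v hu hv K hK hsupp heq1 heq2
end
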